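/- arXiv:2603.22156 — 4 statements merged into one kernel-verified Lean document; each statement's English description precedes it below -/
import Mathlib

section
/- Let n ≥ 1 and let A be an n×n complex matrix. Then det A = (1/n!) · Σ_{σ ∈ S_n} ε(σ) · ∏_{c ≼ σ} Tr(A^{|c|}), where the product runs over all cycles c of σ (fixed points counting as cycles of length 1) and |c| denotes the length of the cycle c. -/
/-!
Expanding `det (A.submatrix f f)` by the Leibniz formula and summing over all maps
`f : Fin n → Fin n` gives `n! • det A`: a map that is not injective repeats a row, and a bijective
one permutes rows and columns alike. Exchanging the two sums, the coefficient of `ε(σ)` is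
`∑ f, ∏ i, A (f i) (f (σ i))`. This sum factors over the cycles of `σ`, because `f` restricts
independently to each cycle, and a cycle of length `L` contributes the sum over closed walks of
length `L`, which is `Tr (A ^ L)`.
-/

open Matrix

/-- `i` is the minimal element of its `σ`-orbit (every orbit element is of the
form `σ ^ k i` for some `k < n`, since orbits have size at most `n`). -/
def IsOrbitRep {n : ℕ} (σ : Equiv.Perm (Fin n)) (i : Fin n) : Prop :=
  ∀ k ∈ Finset.range n, i ≤ (σ ^ k) i

instance {n : ℕ} (σ : Equiv.Perm (Fin n)) : DecidablePred (IsOrbitRep σ) := by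
  unfold IsOrbitRep; infer_instance

/-- The set of minimal representatives of the cycles of `σ` (one per cycle,
fixed points included as cycles of length 1). -/
def cycleReps {n : ℕ} (σ : Equiv.Perm (Fin n)) : Finset (Fin n) :=
  Finset.univ.filter (IsOrbitRep σ)

/-- The length of the cycle of `σ` containing `i` (equal to 1 at a fixed point). -/
noncomputable def cycleLen {n : ℕ} (σ : Equiv.Perm (Fin n)) (i : Fin n) : ℕ :=
  Function.minimalPeriod (⇑σ) i

open Finset Function

namespace Matrix

variable {m R : Type*} [Fintype m] [DecidableEq m] [CommSemiring R]

-- `Fin.cons i g` and `Fin.snoc g j` list the tails and the heads of the edges of the walk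
-- `i, g 0, …, g (L - 1), j`.
theorem pow_succ_apply_eq_sum_prod_cons_snoc (A : Matrix m m R) (L : ℕ) (i j : m) :
    (A ^ (L + 1)) i j = ∑ g : Fin L → m, ∏ k : Fin (L + 1),
      A (Fin.cons (α := fun _ ↦ m) i g k) (Fin.snoc (α := fun _ ↦ m) g j k) := by
  induction L generalizing i with
  | zero => simp [Fin.snoc_zero]
  | succ L ih =>
    rw [pow_succ', mul_apply, ← (Fin.consEquiv fun _ ↦ m).sum_comp, Fintype.sum_prod_type]
    refine sum_congr rfl fun x _ ↦ ?_
    simp only [Fin.consEquiv, Equiv.coe_fn_mk]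
    simp [ih, mul_sum, Fin.prod_univ_succ, ← Fin.cons_snoc_eq_snoc_cons]

theorem trace_pow_eq_sum_prod_finRotate (A : Matrix m m R) {L : ℕ} (hL : 0 < L) :
    trace (A ^ L) = ∑ g : Fin L → m, ∏ k, A (g k) (g (finRotate L k)) := by
  obtain ⟨L, rfl⟩ := Nat.exists_eq_add_one_of_ne_zero hL.ne'
  rw [← (Fin.consEquiv fun _ ↦ m).sum_comp, Fintype.sum_prod_type, trace]
  refine sum_congr rfl fun i _ ↦ ?_
  simp [pow_succ_apply_eq_sum_prod_cons_snoc, Fin.snoc_eq_cons_rotate]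

end Matrix

namespace Equiv.Perm

variable {ι : Type*} (σ : Perm ι)

theorem pow_mod_minimalPeriod_apply (i : ι) (k : ℕ) :
    (σ ^ (k % minimalPeriod σ i)) i = (σ ^ k) i := by
  simp only [coe_pow, iterate_mod_minimalPeriod_eq]

theorem minimalPeriod_pos [Finite ι] (i : ι) : 0 < minimalPeriod σ i :=
  minimalPeriod_pos_of_mem_periodicPts (σ.injective.mem_periodicPts i)

def IsCycleTransversal (R : Finset ι) : Prop :=
  ∀ i, ∃! r, r ∈ R ∧ σ.SameCycle r i

variable {σ} {R : Finset ι}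

namespace IsCycleTransversal

noncomputable def sigmaEquiv [Finite ι] (hR : σ.IsCycleTransversal R) :
    (Σ r : R, Fin (minimalPeriod σ r)) ≃ ι :=
  Equiv.ofBijective (fun x ↦ (σ ^ (x.2 : ℕ)) x.1) <| by
    constructor
    · rintro ⟨⟨r, hr⟩, k⟩ ⟨⟨r', hr'⟩, k'⟩ h
      dsimp only at h
      obtain rfl : r = r' := (hR ((σ ^ (k : ℕ)) r)).unique
        ⟨hr, (SameCycle.refl σ r).pow_right⟩ ⟨hr', h ▸ (SameCycle.refl σ r').pow_right⟩
      obtain rfl : k = k' := Fin.ext <| iterate_injOn_Iio_minimalPeriod k.2 k'.2 <| by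
        simpa only [coe_pow] using h
      rfl
    · intro i
      obtain ⟨r, ⟨hr, hri⟩, -⟩ := hR i
      obtain ⟨k, rfl⟩ := hri.exists_nat_pow_eq
      exact ⟨⟨⟨r, hr⟩, ⟨k % minimalPeriod σ r, Nat.mod_lt _ (σ.minimalPeriod_pos r)⟩⟩,
        σ.pow_mod_minimalPeriod_apply r k⟩

section

variable [Finite ι] (hR : σ.IsCycleTransversal R)

theorem sigmaEquiv_apply (x : Σ r : R, Fin (minimalPeriod σ r)) :
    hR.sigmaEquiv x = (σ ^ (x.2 : ℕ)) x.1 := rfl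

theorem apply_sigmaEquiv (r : R) (k : Fin (minimalPeriod σ r)) :
    σ (hR.sigmaEquiv ⟨r, k⟩) = hR.sigmaEquiv ⟨r, finRotate _ k⟩ := by
  rw [sigmaEquiv_apply, sigmaEquiv_apply, ← Perm.mul_apply, ← pow_succ',
    ← σ.pow_mod_minimalPeriod_apply _ (k + 1)]
  simp [finRotate_apply, Fin.val_add, Nat.add_mod]

end

theorem sum_prod_apply_eq_prod_trace_pow [Fintype ι] [DecidableEq ι] {m S : Type*} [Fintype m]
    [DecidableEq m] [CommSemiring S] (hR : σ.IsCycleTransversal R) (A : Matrix m m S) :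
    ∑ f : ι → m, ∏ i, A (f i) (f (σ i)) = ∏ r ∈ R, (A ^ minimalPeriod σ r).trace := by
  set e := hR.sigmaEquiv
  calc ∑ f : ι → m, ∏ i, A (f i) (f (σ i))
      = ∑ f : ι → m, ∏ r : R, ∏ k : Fin (minimalPeriod σ r),
          A (f (e ⟨r, k⟩)) (f (e ⟨r, finRotate _ k⟩)) := by
        refine sum_congr rfl fun f _ ↦ ?_
        simp only [← e.prod_comp, Fintype.prod_sigma, e, apply_sigmaEquiv]
    _ = ∑ g : (r : R) → Fin (minimalPeriod σ r) → m, ∏ r : R, ∏ k,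
          A (g r k) (g r (finRotate _ k)) :=
        Fintype.sum_equiv ((e.arrowCongr (Equiv.refl m)).symm.trans
          (Equiv.piCurry fun (r : R) (_ : Fin (minimalPeriod σ r)) ↦ m)) _ _ fun f ↦ rfl
    _ = ∏ r : R, ∑ h : Fin (minimalPeriod σ r) → m, ∏ k, A (h k) (h (finRotate _ k)) :=
        (Fintype.prod_sum fun (r : R) (h : Fin (minimalPeriod σ r) → m) ↦
          ∏ k, A (h k) (h (finRotate _ k))).symm
    _ = ∏ r ∈ R, (A ^ minimalPeriod σ r).trace := by
        rw [← prod_coe_sort R]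
        simp only [Matrix.trace_pow_eq_sum_prod_finRotate _ (σ.minimalPeriod_pos _)]

end IsCycleTransversal

end Equiv.Perm

theorem isOrbitRep_iff_forall_sameCycle_le {n : ℕ} (σ : Equiv.Perm (Fin n)) (i : Fin n) :
    IsOrbitRep σ i ↔ ∀ j, σ.SameCycle i j → i ≤ j := by
  refine ⟨fun h j hij ↦ ?_, fun h k _ ↦ h _ (Equiv.Perm.SameCycle.refl σ i).pow_right⟩
  obtain ⟨k, rfl⟩ := hij.exists_nat_pow_eq
  have hlt : k % minimalPeriod σ i < n := (Nat.mod_lt _ (σ.minimalPeriod_pos i)).trans_le <| by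
    simpa using minimalPeriod_le_card (f := σ) (x := i)
  rw [← σ.pow_mod_minimalPeriod_apply]
  exact h _ (mem_range.2 hlt)

theorem isCycleTransversal_cycleReps {n : ℕ} (σ : Equiv.Perm (Fin n)) :
    σ.IsCycleTransversal (cycleReps σ) := by
  classical
  intro i
  obtain ⟨r, hr, hmin⟩ := (univ.filter (σ.SameCycle i)).exists_min_image id
    ⟨i, mem_filter.2 ⟨mem_univ _, .refl σ i⟩⟩
  simp only [mem_filter, mem_univ, true_and, id] at hr hmin
  have hrep : r ∈ cycleReps σ := mem_filter.2
    ⟨mem_univ _, (isOrbitRep_iff_forall_sameCycle_le σ r).2 fun j hj ↦ hmin j (hr.trans hj)⟩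
  refine ⟨r, ⟨hrep, hr.symm⟩, fun r' ⟨hr', hr'i⟩ ↦ le_antisymm ?_ (hmin r' hr'i.symm)⟩
  exact (isOrbitRep_iff_forall_sameCycle_le σ r').1 (mem_filter.1 hr').2 r (hr'i.trans hr)

namespace Matrix

variable {ι R : Type*} [Fintype ι] [DecidableEq ι] [CommRing R]

theorem sum_det_submatrix_self (A : Matrix ι ι R) :
    ∑ f : ι → ι, (A.submatrix f f).det = (Fintype.card ι).factorial * A.det := by
  have hzero : ∀ f ∉ univ.image fun σ : Equiv.Perm ι ↦ ⇑σ, (A.submatrix f f).det = 0 := by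
    intro f hf
    obtain ⟨i, j, hij, hne⟩ := not_injective_iff.1 fun hinj ↦ hf <| mem_image.2
      ⟨Equiv.ofBijective f (Finite.injective_iff_bijective.1 hinj), mem_univ _, rfl⟩
    exact det_zero_of_row_eq hne (by ext k; simp [hij])
  rw [← sum_subset (subset_univ _) fun f _ ↦ hzero f,
    sum_image fun σ _ τ _ h ↦ DFunLike.coe_injective h]
  simp [det_submatrix_equiv_self, Fintype.card_perm]

theorem sum_sign_mul_sum_prod_apply (A : Matrix ι ι R) :
    ∑ σ : Equiv.Perm ι, ((Equiv.Perm.sign σ : ℤ) : R) * ∑ f : ι → ι, ∏ i, A (f i) (f (σ i)) =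
      (Fintype.card ι).factorial * A.det := by
  simp_rw [← sum_det_submatrix_self, mul_sum]
  rw [sum_comm]
  refine sum_congr rfl fun f _ ↦ ?_
  rw [← det_transpose, det_apply']
  rfl

end Matrix

theorem det_eq_inv_factorial_sum_sign_prod_trace_pow_general
    (n : ℕ) (A : Matrix (Fin n) (Fin n) ℂ) :
    A.det = (1 / (n.factorial : ℂ)) *
      ∑ σ : Equiv.Perm (Fin n),
        ((Equiv.Perm.sign σ : ℤ) : ℂ) *
          ∏ i ∈ cycleReps σ, (A ^ (cycleLen σ i)).trace := by
  have hcycles (σ : Equiv.Perm (Fin n)) : ∏ i ∈ cycleReps σ, (A ^ cycleLen σ i).trace =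
      ∑ f : Fin n → Fin n, ∏ i, A (f i) (f (σ i)) :=
    ((isCycleTransversal_cycleReps σ).sum_prod_apply_eq_prod_trace_pow A).symm
  simp_rw [hcycles, sum_sign_mul_sum_prod_apply, Fintype.card_fin]
  rw [one_div, inv_mul_cancel_left₀ (Nat.cast_ne_zero.2 n.factorial_ne_zero)]

/-- For an `n × n` complex matrix `A` (with `n ≥ 1`),
`det A = (1/n!) · Σ_{σ ∈ S_n} ε(σ) · ∏_{c ≼ σ} Tr(A^{|c|})`, where the product runs
over the cycles of `σ` (fixed points counting as cycles of length 1, the cycle of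
`i` having length `cycleLen σ i`), each cycle being represented by its minimal
element. -/
theorem det_eq_inv_factorial_sum_sign_prod_trace_pow
    (n : ℕ) (hn : 1 ≤ n) (A : Matrix (Fin n) (Fin n) ℂ) :
    A.det = (1 / (n.factorial : ℂ)) *
      ∑ σ : Equiv.Perm (Fin n),
        ((Equiv.Perm.sign σ : ℤ) : ℂ) *
          ∏ i ∈ cycleReps σ, (A ^ (cycleLen σ i)).trace :=
  det_eq_inv_factorial_sum_sign_prod_trace_pow_general n A
end

section
/- Let R be a commutative ring and let A be an n×n matrix over R with the given block structure. Then n_1!⋯n_p! · det A = Σ_{σ ∈ S_n} ε(σ) · ∏_{(i_1 ⋯ i_r) ≼ σ} Tr( A_{[bl(i_1) bl(i_2)]} A_{[bl(i_2) bl(i_3)]} ⋯ A_{[bl(i_r) bl(i_1)]} ), where the product runs over all cycles of σ (fixed points counting as cycles of length 1). -/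
open Matrix

/-- The block `A_{[ab]}` of `A`, padded by zeros to an `n × n` matrix.
Traces of products of such padded blocks along a cyclic sequence of compatible
block indices agree with the traces of the products of the genuine rectangular
blocks. -/
def blockPad {ι κ R : Type*} [DecidableEq κ] [Zero R] (bl : ι → κ)
    (A : Matrix ι ι R) (a b : κ) : Matrix ι ι R :=
  Matrix.of fun i j => if bl i = a ∧ bl j = b then A i j else 0

/-- `Tr(A_{[bl i₁, bl i₂]} ⋯ A_{[bl iᵣ, bl i₁]})` where `(i₁ ⋯ iᵣ)` is the cycle of `σ`
through `i = i₁` (of length `r = minimalPeriod σ i`, `i_{k+1} = σ i_k`). -/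
noncomputable def cycleBlockTrace {n p : ℕ} {R : Type*} [CommRing R] (bl : Fin n → Fin p)
    (A : Matrix (Fin n) (Fin n) R) (σ : Equiv.Perm (Fin n)) (i : Fin n) : R :=
  (((List.range (Function.minimalPeriod (⇑σ) i)).map
      fun k => blockPad bl A (bl ((σ ^ k) i)) (bl ((σ ^ (k + 1)) i))).prod).trace

/-!
Expanding every trace into a sum over closed walks, the product over the cycles of `σ` becomes a
single sum, over all block-preserving maps `g : Fin n → Fin n` (those with `bl ∘ g = bl`), of
`∏ x, A (g x) (g (σ x))`: a closed walk along each cycle is exactly a choice of `g` on that cycle.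
Summed against the signs of `σ`, each `g` contributes `det (A.submatrix g g)`, which is `det A`
when `g` is a permutation and `0` otherwise, and the block-preserving permutations number
`n₁! ⋯ n_p!`.
-/

section WalkExpansion

variable {ι R : Type*} [Fintype ι] [DecidableEq ι] [CommSemiring R]

theorem Matrix.trace_list_prod_range_mul (M : ℕ → Matrix ι ι R) (m : ℕ) (N : Matrix ι ι R) :
    (((List.range m).map M).prod * N).trace =
      ∑ x : Fin (m + 1) → ι,
        (∏ k : Fin m, M k (x k.castSucc) (x k.succ)) * N (x (Fin.last m)) (x 0) := by
  induction m generalizing N with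
  | zero =>
    rw [← (Equiv.funUnique (Fin 1) ι).symm.sum_comp]
    simp [trace]
  | succ m ih =>
    rw [List.range_succ, List.map_append, List.prod_append, List.map_singleton,
      List.prod_singleton, Matrix.mul_assoc, ih]
    conv_rhs =>
      rw [← (Fin.snocEquiv fun _ => ι).sum_comp, Fintype.sum_prod_type, Finset.sum_comm]
    refine Finset.sum_congr rfl fun x _ => ?_
    simp [Fin.snocEquiv, Fin.prod_univ_castSucc, ← Fin.castSucc_succ, Matrix.mul_apply,
      Finset.mul_sum, mul_assoc]

theorem Matrix.trace_list_prod_range (M : ℕ → Matrix ι ι R) {r : ℕ} (hr : r ≠ 0) :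
    ((List.range r).map M).prod.trace =
      ∑ x : Fin r → ι, ∏ k : Fin r, M k (x k) (x (finRotate r k)) := by
  obtain ⟨m, rfl⟩ := Nat.exists_eq_succ_of_ne_zero hr
  rw [List.range_succ, List.map_append, List.prod_append, List.map_singleton,
    List.prod_singleton, trace_list_prod_range_mul]
  refine Finset.sum_congr rfl fun x _ => ?_
  simp [Fin.prod_univ_castSucc]

end WalkExpansion

namespace Equiv.Perm

variable {α : Type*} {σ : Perm α} {x y : α}

theorem minimalPeriod_pos_s2 [Finite α] (σ : Perm α) (x : α) : 0 < Function.minimalPeriod σ x :=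
  Function.minimalPeriod_pos_of_mem_periodicPts (σ.injective.mem_periodicPts x)

theorem pow_mod_minimalPeriod_apply_s2 (σ : Perm α) (x : α) (k : ℕ) :
    (σ ^ (k % Function.minimalPeriod σ x)) x = (σ ^ k) x := by
  simp only [← iterate_eq_pow, Function.iterate_mod_minimalPeriod_eq]

theorem sameCycle_iff_exists_pow_lt_minimalPeriod [Finite α] :
    σ.SameCycle x y ↔ ∃ k < Function.minimalPeriod σ x, (σ ^ k) x = y := by
  refine ⟨fun h => ?_, fun ⟨k, _, hk⟩ => hk ▸ (sameCycle_pow_right.mpr (SameCycle.refl σ x))⟩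
  obtain ⟨k, rfl⟩ := h.exists_nat_pow_eq
  exact ⟨k % _, Nat.mod_lt _ (σ.minimalPeriod_pos_s2 x), pow_mod_minimalPeriod_apply_s2 σ x k⟩

end Equiv.Perm

section CycleReps

open Equiv Function

variable {n : ℕ} {σ : Perm (Fin n)} {i j : Fin n}

theorem isOrbitRep_iff : IsOrbitRep σ i ↔ ∀ j, σ.SameCycle i j → i ≤ j := by
  refine ⟨fun h j hij => ?_, fun h k _ => h _ (Perm.sameCycle_pow_right.mpr (.refl σ i))⟩
  obtain ⟨k, hk, rfl⟩ := Perm.sameCycle_iff_exists_pow_lt_minimalPeriod.mp hij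
  refine h k (Finset.mem_range.mpr (hk.trans_le ?_))
  simpa using minimalPeriod_le_card (f := σ) (x := i)

theorem IsOrbitRep.eq_of_sameCycle (hi : IsOrbitRep σ i) (hj : IsOrbitRep σ j)
    (hij : σ.SameCycle i j) : i = j :=
  le_antisymm (isOrbitRep_iff.mp hi j hij) (isOrbitRep_iff.mp hj i hij.symm)

variable (σ) in
theorem exists_isOrbitRep_sameCycle (x : Fin n) :
    ∃ c, IsOrbitRep σ c ∧ σ.SameCycle c x := by
  classical
  obtain ⟨c, hc, hmin⟩ := (Finset.univ.filter (σ.SameCycle x)).exists_min_image id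
    ⟨x, Finset.mem_filter.mpr ⟨Finset.mem_univ x, .refl σ x⟩⟩
  simp only [Finset.mem_filter, Finset.mem_univ, true_and, id] at hc hmin
  exact ⟨c, isOrbitRep_iff.mpr fun j hcj => hmin j (hc.trans hcj), hc.symm⟩

variable (σ) in
noncomputable def cycleRepsSigmaEquiv :
    (Σ c : cycleReps σ, Fin (minimalPeriod σ c)) ≃ Fin n :=
  Equiv.ofBijective (fun p => (σ ^ (p.2 : ℕ)) p.1) <| by
    constructor
    · rintro ⟨⟨c, hc⟩, k⟩ ⟨⟨d, hd⟩, l⟩ h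
      simp only [cycleReps, Finset.mem_filter] at hc hd h
      have hcd : σ.SameCycle ((σ ^ (k : ℕ)) c) ((σ ^ (l : ℕ)) d) := by rw [h]
      obtain rfl : c = d := hc.2.eq_of_sameCycle hd.2 <| by
        simpa only [Perm.sameCycle_pow_left, Perm.sameCycle_pow_right] using hcd
      have hkl : (k : ℕ) = l := by
        simpa [← Perm.iterate_eq_pow] using
          iterate_injOn_Iio_minimalPeriod (f := σ) (x := c) k.2 l.2 h
      simp [Fin.ext hkl]
    · intro x
      obtain ⟨c, hc, hcx⟩ := exists_isOrbitRep_sameCycle σ x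
      obtain ⟨k, hk, rfl⟩ := Perm.sameCycle_iff_exists_pow_lt_minimalPeriod.mp hcx
      exact ⟨⟨⟨c, Finset.mem_filter.mpr ⟨Finset.mem_univ c, hc⟩⟩, ⟨k, hk⟩⟩, rfl⟩

theorem cycleRepsSigmaEquiv_apply (c : cycleReps σ) (k : Fin (minimalPeriod σ c)) :
    cycleRepsSigmaEquiv σ ⟨c, k⟩ = (σ ^ (k : ℕ)) c :=
  rfl

theorem apply_cycleRepsSigmaEquiv (c : cycleReps σ) (k : Fin (minimalPeriod σ c)) :
    σ (cycleRepsSigmaEquiv σ ⟨c, k⟩) = cycleRepsSigmaEquiv σ ⟨c, finRotate _ k⟩ := by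
  have := k.neZero
  rw [cycleRepsSigmaEquiv_apply, cycleRepsSigmaEquiv_apply, finRotate_apply, Fin.val_add,
    Fin.val_one', Nat.add_mod_mod, Perm.pow_mod_minimalPeriod_apply_s2, pow_succ', Perm.mul_apply]

end CycleReps

section CycleExpansion

open Equiv Function

variable {ι R : Type*} [Fintype ι] [DecidableEq ι] [CommSemiring R] {n : ℕ}

theorem prod_cycleReps_trace_list_prod (σ : Perm (Fin n)) (N : Fin n → Matrix ι ι R) :
    ∏ c ∈ cycleReps σ,
        ((List.range (minimalPeriod σ c)).map fun k => N ((σ ^ k) c)).prod.trace =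
      ∑ g : Fin n → ι, ∏ x, N x (g x) (g (σ x)) := by
  set e := cycleRepsSigmaEquiv σ
  calc _ = ∏ c : cycleReps σ, ∑ y : Fin (minimalPeriod σ c) → ι,
        ∏ k, N (e ⟨c, k⟩) (y k) (y (finRotate _ k)) := by
        rw [← Finset.prod_coe_sort]
        refine Finset.prod_congr rfl fun c _ => ?_
        exact Matrix.trace_list_prod_range _ (σ.minimalPeriod_pos_s2 c).ne'
    _ = ∑ G : ∀ c : cycleReps σ, Fin (minimalPeriod σ c) → ι,
        ∏ c, ∏ k, N (e ⟨c, k⟩) (G c k) (G c (finRotate _ k)) := Finset.prod_univ_sum _ _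
    _ = ∑ G : (Σ c : cycleReps σ, Fin (minimalPeriod σ c)) → ι,
        ∏ p, N (e p) (G p) (G ⟨p.1, finRotate _ p.2⟩) := by
        refine (Fintype.sum_equiv (piCurry fun _ _ => ι) _ _ fun G => ?_).symm
        rw [Fintype.prod_sigma]
        rfl
    _ = ∑ g : Fin n → ι, ∏ x, N x (g x) (g (σ x)) := by
        refine Fintype.sum_equiv (e.arrowCongr (Equiv.refl ι)) _ _ fun G => ?_
        rw [← e.prod_comp]
        refine Fintype.prod_congr _ _ fun ⟨c, k⟩ => ?_
        simp only [e, arrowCongr_apply, coe_refl, Function.comp_apply, id_eq, symm_apply_apply,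
          apply_cycleRepsSigmaEquiv]

end CycleExpansion

section Determinant

open Equiv Function

variable {α β R : Type*} [Fintype α] [DecidableEq α] [CommRing R]

theorem Matrix.det_submatrix_self_eq_sum (A : Matrix β β R) (g : α → β) :
    (A.submatrix g g).det =
      ∑ σ : Perm α, ((Perm.sign σ : ℤ) : R) * ∏ x, A (g x) (g (σ x)) := by
  rw [← det_transpose, det_apply']
  rfl

theorem Matrix.det_submatrix_self_of_not_injective (A : Matrix β β R) {g : α → β}
    (hg : ¬ Injective g) : (A.submatrix g g).det = 0 := by
  obtain ⟨x, y, hxy, hne⟩ := not_injective_iff.mp hg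
  exact det_zero_of_row_eq hne (funext fun z => by simp [hxy])

theorem Matrix.sum_det_submatrix_of_comp_eq {κ : Type*} [Fintype κ] [DecidableEq κ]
    (f : α → κ) (A : Matrix α α R) :
    ∑ g ∈ Finset.univ.filter (fun g : α → α => f ∘ g = f), (A.submatrix g g).det =
      ((∏ a, (Fintype.card {x // f x = a}).factorial : ℕ) : R) * A.det := by
  rw [← DomMulAct.stabilizer_card, Fintype.card_subtype, ← nsmul_eq_mul, ← Finset.sum_const,
    Finset.sum_filter, Finset.sum_filter]
  refine (Fintype.sum_of_injective (fun τ : Perm α => ⇑τ) DFunLike.coe_injective _ _ ?_ ?_).symm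
  · refine fun g hg => ite_eq_right_iff.mpr fun _ =>
      det_submatrix_self_of_not_injective A fun hinj => hg ?_
    exact ⟨Equiv.ofBijective g (Finite.injective_iff_bijective.mp hinj), rfl⟩
  · intro τ
    simp only [det_submatrix_equiv_self]

end Determinant

section BlockTraces

open Equiv Function

variable {n p : ℕ} {R : Type*} [CommRing R]

theorem cycleBlockTrace_eq (bl : Fin n → Fin p) (A : Matrix (Fin n) (Fin n) R)
    (σ : Perm (Fin n)) (i : Fin n) :
    cycleBlockTrace bl A σ i =
      ((List.range (minimalPeriod σ i)).map
        fun k => blockPad bl A (bl ((σ ^ k) i)) (bl (σ ((σ ^ k) i)))).prod.trace := by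
  simp only [cycleBlockTrace, pow_succ', Perm.mul_apply]

theorem prod_blockPad_apply {ι κ : Type*} [Fintype ι] [DecidableEq κ] (bl : ι → κ)
    (A : Matrix ι ι R) (σ : Perm ι) (g : ι → ι) :
    ∏ x, blockPad bl A (bl x) (bl (σ x)) (g x) (g (σ x)) =
      if bl ∘ g = bl then ∏ x, A (g x) (g (σ x)) else 0 := by
  simp only [blockPad, Matrix.of_apply, Fintype.prod_ite_zero]
  congr 1
  simp only [funext_iff, Function.comp_apply]
  exact propext ⟨fun h x => (h x).1, fun h x => ⟨h x, h (σ x)⟩⟩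

theorem prod_cycleBlockTrace (bl : Fin n → Fin p) (A : Matrix (Fin n) (Fin n) R)
    (σ : Perm (Fin n)) :
    ∏ i ∈ cycleReps σ, cycleBlockTrace bl A σ i =
      ∑ g ∈ Finset.univ.filter (fun g : Fin n → Fin n => bl ∘ g = bl),
        ∏ x, A (g x) (g (σ x)) := by
  simp only [cycleBlockTrace_eq, Finset.sum_filter, ← prod_blockPad_apply]
  exact prod_cycleReps_trace_list_prod σ fun x => blockPad bl A (bl x) (bl (σ x))

end BlockTraces

theorem factorials_mul_det_blockMatrix_eq_sum_sign_prod_blockTraces_general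
    {R : Type*} [CommRing R]
    (p : ℕ) (nv : Fin p → ℕ)
    (n : ℕ)
    (bl : Fin n → Fin p)
    (hcard : ∀ a, (Finset.univ.filter fun i => bl i = a).card = nv a)
    (A : Matrix (Fin n) (Fin n) R) :
    ((∏ a, (nv a).factorial : ℕ) : R) * A.det =
      ∑ σ : Equiv.Perm (Fin n),
        ((Equiv.Perm.sign σ : ℤ) : R) *
          ∏ i ∈ cycleReps σ, cycleBlockTrace bl A σ i := by
  calc ((∏ a, (nv a).factorial : ℕ) : R) * A.det
      = ∑ g ∈ Finset.univ.filter (fun g : Fin n → Fin n => bl ∘ g = bl),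
          (A.submatrix g g).det := by
        rw [Matrix.sum_det_submatrix_of_comp_eq]
        simp only [Fintype.card_subtype, hcard]
    _ = _ := by
        simp only [prod_cycleBlockTrace, Finset.mul_sum, Matrix.det_submatrix_self_eq_sum]
        exact Finset.sum_comm

/-- Over an arbitrary commutative ring:
`n₁!⋯n_p! · det A = Σ_{σ ∈ S_n} ε(σ) · ∏_{cycles (i₁ ⋯ iᵣ) of σ}
Tr(A_{[bl i₁, bl i₂]} ⋯ A_{[bl iᵣ, bl i₁]})` (fixed points counting as cycles of
length 1). The partition of `{1,…,n}` into consecutive intervals `I₁,…,I_p` with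
`|I_a| = n_a` is encoded by the monotone map `bl` with fiber cardinalities `nv a`. -/
theorem factorials_mul_det_blockMatrix_eq_sum_sign_prod_blockTraces
    {R : Type*} [CommRing R]
    (p : ℕ) (hp : 1 ≤ p) (nv : Fin p → ℕ) (hnv : ∀ a, 1 ≤ nv a)
    (n : ℕ) (hn : n = ∑ a, nv a)
    (bl : Fin n → Fin p) (hbl : Monotone bl)
    (hcard : ∀ a, (Finset.univ.filter fun i => bl i = a).card = nv a)
    (A : Matrix (Fin n) (Fin n) R) :
    ((∏ a, (nv a).factorial : ℕ) : R) * A.det =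
      ∑ σ : Equiv.Perm (Fin n),
        ((Equiv.Perm.sign σ : ℤ) : R) *
          ∏ i ∈ cycleReps σ, cycleBlockTrace bl A σ i :=
  factorials_mul_det_blockMatrix_eq_sum_sign_prod_blockTraces_general p nv n bl hcard A
end

section
/- Let R ⊆ {1,…,n} and let δ be a kinematic permutation of R. Then Σ_{σ ∈ S_n with R_σ = R and δ_σ = δ} ∏_{a=1}^p (−n_a)^{ℓ_a(σ)} = (−1)^{n + |R|} · ∏_{a=1}^p ( n_a − |R ∩ I_a| )!. -/
/-- `R_σ = { i : bl (σ⁻¹ i) ≠ bl i }`. -/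
def Rsig {n p : ℕ} (bl : Fin n → Fin p) (σ : Equiv.Perm (Fin n)) : Finset (Fin n) :=
  Finset.univ.filter fun i => bl (σ⁻¹ i) ≠ bl i

/-- `t(σ,i) = min { k ≥ 1 : bl (σ^k i) ≠ bl i }`.  For `i ∈ R_σ` such a `k`
exists with `k ≤ n`, so the minimum may be taken over `1 ≤ k ≤ n`
(with junk value `1` otherwise). -/
def tmin {n p : ℕ} (bl : Fin n → Fin p) (σ : Equiv.Perm (Fin n)) (i : Fin n) : ℕ :=
  WithTop.untopD 1 (((Finset.Icc 1 n).filter fun k => bl ((σ ^ k) i) ≠ bl i).min)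

/-- `ℓ_a(σ)`: the number of cycles of `σ` entirely contained in the block `I_a`
(fixed points included), each cycle counted via its minimal representative. -/
def cyclesInBlock {n p : ℕ} (bl : Fin n → Fin p) (σ : Equiv.Perm (Fin n)) (a : Fin p) : ℕ :=
  (Finset.univ.filter fun i : Fin n =>
      (∀ k ∈ Finset.range n, bl ((σ ^ k) i) = a) ∧
      ∀ k ∈ Finset.range n, i ≤ (σ ^ k) i).card

/-!
Write `σ = δ * σ'`. Then `R_σ = R` and `δ_σ = δ` exactly when `σ'` preserves every block and
each cycle of `σ'` meets `R` at most once (`σ'` is admissible): between two consecutive visits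
of `R`, the orbit of `σ` follows that of `σ'` inside one block, and `δ` then moves it to the next
block. The cycles of `σ` inside a block are the cycles of `σ'` inside that block avoiding `R`.

Over admissible `σ'`, the sum of `∏_a x_a ^ (number of cycles of σ' in I_a \ R)` is
`∏_a ∏_{r_a ≤ k < n_a} (x_a + k)` with `r_a = |R ∩ I_a|`. Indeed, if `e` is the largest point
outside `R`, then `σ' ↦ (σ'⁻¹ e, σ' * swap e (σ'⁻¹ e))` identifies admissible permutations with
pairs `(j, σ'')` where `j` lies in the block of `e` and `σ''` is admissible and fixes `e`. For
`j = e` the point `e` is a new cycle, contributing `x_{bl e}`; otherwise `e` is inserted into the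
cycle of `j`, and no cycle count changes because `e` is never the least point of its cycle.
Taking `x_a = -n_a` gives `(-1)^(n_a - r_a) (n_a - r_a)!`.
-/

open Finset Equiv

namespace Equiv.Perm

variable {α : Type*}

theorem exists_pos_pow_apply_eq_self_le_card [Fintype α] (σ : Perm α) (i : α) :
    ∃ d, 0 < d ∧ d ≤ Fintype.card α ∧ (σ ^ d) i = i :=
  ⟨Function.minimalPeriod σ i,
    Function.minimalPeriod_pos_of_mem_periodicPts (σ.injective.mem_periodicPts i),
    Function.minimalPeriod_le_card, Function.iterate_minimalPeriod⟩

theorem pow_apply_of_forall_lt_card [Fintype α] (σ : Perm α) (i : α) {Q : α → Prop}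
    (h : ∀ k < Fintype.card α, Q ((σ ^ k) i)) (k : ℕ) : Q ((σ ^ k) i) := by
  have hpos := Function.minimalPeriod_pos_of_mem_periodicPts (σ.injective.mem_periodicPts i)
  rw [coe_pow, ← Function.iterate_mod_minimalPeriod_eq, ← coe_pow]
  exact h _ ((Nat.mod_lt _ hpos).trans_le Function.minimalPeriod_le_card)

theorem exists_pow_apply_eq_inv_apply [Finite α] (σ : Perm α) (i : α) (k : ℕ) :
    ∃ m, (σ ^ m) i = σ⁻¹ ((σ ^ k) i) :=
  (sameCycle_symm_apply_right.2 (sameCycle_pow_right.2 (SameCycle.refl σ i))).exists_nat_pow_eq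

theorem exists_first_return [Fintype α] (σ : Perm α) {R : Finset α} {i : α} (hi : i ∈ R) :
    ∃ m, 0 < m ∧ m ≤ Fintype.card α ∧ (σ ^ m) i ∈ R ∧ ∀ k, 0 < k → k < m → (σ ^ k) i ∉ R := by
  classical
  obtain ⟨d, hd, hdc, hdi⟩ := σ.exists_pos_pow_apply_eq_self_le_card i
  have hdR : (σ ^ d) i ∈ R := by rwa [hdi]
  have hex : ∃ m, 0 < m ∧ (σ ^ m) i ∈ R := ⟨d, hd, hdR⟩
  exact ⟨Nat.find hex, (Nat.find_spec hex).1, (Nat.find_min' hex ⟨hd, hdR⟩).trans hdc,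
    (Nat.find_spec hex).2, fun k hk hkm hkR => Nat.find_min hex hkm ⟨hk, hkR⟩⟩

theorem pow_apply_eq_self_of_first_return {σ : Perm α} {R : Finset α} {i : α} {m : ℕ}
    (hm : 0 < m) (hmi : (σ ^ m) i = i) (hfirst : ∀ k, 0 < k → k < m → (σ ^ k) i ∉ R)
    {k : ℕ} (hk : (σ ^ k) i ∈ R) : (σ ^ k) i = i := by
  have hmod : (σ ^ k) i = (σ ^ (k % m)) i :=
    ((show Function.IsPeriodicPt σ m i from hmi).iterate_mod_apply k).symm
  rcases Nat.eq_zero_or_pos (k % m) with h0 | hpos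
  · rw [hmod, h0, pow_zero, one_apply]
  · exact absurd (hmod ▸ hk) (hfirst _ hpos (Nat.mod_lt _ hm))

theorem mul_pow_succ_apply {δ σ : Perm α} {i : α} {k : ℕ}
    (h : ∀ j, 0 < j → j ≤ k → δ ((σ ^ j) i) = (σ ^ j) i) :
    ((δ * σ) ^ (k + 1)) i = δ ((σ ^ (k + 1)) i) := by
  induction k with
  | zero => rfl
  | succ k ih =>
    rw [pow_succ', mul_apply, ih fun j hj hjk => h j hj (by omega), h (k + 1) k.succ_pos le_rfl,
      pow_succ' σ (k + 1), mul_apply]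
    rfl

theorem mul_pow_apply_of_apply_eq_self {δ σ : Perm α} {i : α} {k : ℕ}
    (h : ∀ j, 0 < j → j ≤ k → δ ((σ ^ j) i) = (σ ^ j) i) : ((δ * σ) ^ k) i = (σ ^ k) i := by
  cases k with
  | zero => rfl
  | succ k => rw [mul_pow_succ_apply fun j hj hjk => h j hj (by omega), h (k + 1) k.succ_pos le_rfl]

theorem apply_pow_apply_eq_of_apply_apply_eq {β : Type*} {f : α → β} {σ : Perm α}
    (h : ∀ i, f (σ i) = f i) (k : ℕ) (i : α) : f ((σ ^ k) i) = f i := by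
  induction k with
  | zero => rfl
  | succ k ih => rw [pow_succ', mul_apply, h, ih]

theorem pow_apply_ne_of_apply_eq_self {σ : Perm α} {e x : α} (he : σ e = e) (hx : x ≠ e)
    (k : ℕ) : (σ ^ k) x ≠ e := fun h =>
  hx ((σ ^ k).injective (h.trans (pow_apply_eq_self_of_apply_eq_self he k).symm))

section Swap

variable [DecidableEq α] {σ : Perm α} {e j x : α}

theorem exists_mul_swap_pow_apply_eq (he : σ e = e) (hx : x ≠ e) (k : ℕ) :
    ∃ m, ((σ * swap e j) ^ m) x = (σ ^ k) x := by
  induction k with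
  | zero => exact ⟨0, rfl⟩
  | succ k ih =>
    obtain ⟨m, hm⟩ := ih
    have hy := pow_apply_ne_of_apply_eq_self he hx k
    by_cases hyj : (σ ^ k) x = j
    · have hme : ((σ * swap e j) ^ (m + 1)) x = e := by
        rw [pow_succ', mul_apply, hm, mul_apply, hyj, swap_apply_right, he]
      refine ⟨m + 2, ?_⟩
      rw [pow_succ', mul_apply, hme, mul_apply, swap_apply_left, pow_succ', mul_apply, hyj]
    · refine ⟨m + 1, ?_⟩
      rw [pow_succ', mul_apply, hm, mul_apply, swap_apply_of_ne_of_ne hy hyj, pow_succ', mul_apply]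

theorem mul_swap_pow_apply_eq_or (he : σ e = e) (hx : x ≠ e) (k : ℕ) :
    (((σ * swap e j) ^ k) x = e ∧ ∃ m, (σ ^ m) x = j) ∨
      ∃ m, ((σ * swap e j) ^ k) x = (σ ^ m) x := by
  induction k with
  | zero => exact Or.inr ⟨0, rfl⟩
  | succ k ih =>
    rw [pow_succ', mul_apply]
    rcases ih with ⟨hke, m, hmj⟩ | ⟨m, hm⟩
    · refine Or.inr ⟨m + 1, ?_⟩
      rw [hke, mul_apply, swap_apply_left, pow_succ', mul_apply, hmj]
    · have hy := pow_apply_ne_of_apply_eq_self he hx m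
      by_cases hyj : (σ ^ m) x = j
      · exact Or.inl ⟨by rw [hm, mul_apply, hyj, swap_apply_right, he], m, hyj⟩
      · refine Or.inr ⟨m + 1, ?_⟩
        rw [hm, mul_apply, swap_apply_of_ne_of_ne hy hyj, pow_succ', mul_apply]

end Swap

theorem support_eq_of_block_apply_ne {β : Type*} [DecidableEq α] [Fintype α] {bl : α → β}
    {R : Finset α} {δ : Perm α} (hkin : ∀ i ∈ R, bl (δ i) ≠ bl i) (hfix : ∀ i ∉ R, δ i = i) :
    δ.support = R := by
  ext i
  rw [Perm.mem_support]
  exact ⟨fun h => by_contra fun hi => h (hfix i hi), fun hi h => hkin i hi (by rw [h])⟩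

section CycleCount

variable [Fintype α] [LinearOrder α]

noncomputable def numCyclesIn (σ : Perm α) (Q : α → Prop) : ℕ :=
  open Classical in #{i | (∀ k : ℕ, Q ((σ ^ k) i)) ∧ ∀ k : ℕ, i ≤ (σ ^ k) i}

variable {σ : Perm α} {s : Finset α} {P : α → Prop} {e j : α}

theorem numCyclesIn_of_apply_eq_self [DecidablePred P] (he : σ e = e) (hes : e ∈ s) :
    numCyclesIn σ (fun i => i ∈ s ∧ P i) =
      numCyclesIn σ (fun i => i ∈ s.erase e ∧ P i) + if P e then 1 else 0 := by
  classical
  simp only [numCyclesIn]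
  set F := ({i | (∀ k : ℕ, (σ ^ k) i ∈ s ∧ P ((σ ^ k) i)) ∧ ∀ k : ℕ, i ≤ (σ ^ k) i} : Finset α)
  have herase : ({i | (∀ k : ℕ, (σ ^ k) i ∈ s.erase e ∧ P ((σ ^ k) i)) ∧
      ∀ k : ℕ, i ≤ (σ ^ k) i} : Finset α) = F.erase e := by
    ext i
    simp only [F, mem_erase, mem_filter, mem_univ, true_and]
    constructor
    · rintro ⟨h, hle⟩
      exact ⟨by simpa using (h 0).1.1, fun k => ⟨(h k).1.2, (h k).2⟩, hle⟩
    · rintro ⟨hie, h, hle⟩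
      exact ⟨fun k => ⟨⟨pow_apply_ne_of_apply_eq_self he hie k, (h k).1⟩, (h k).2⟩, hle⟩
  have heF : e ∈ F ↔ P e := by
    simp [F, pow_apply_eq_self_of_apply_eq_self he, hes]
  rw [herase]
  by_cases hP : P e
  · rw [if_pos hP, card_erase_add_one (heF.2 hP)]
  · rw [if_neg hP, erase_eq_of_notMem (mt heF.1 hP), add_zero]

theorem numCyclesIn_mul_swap (he : σ e = e) (hes : e ∈ s) (hje : j ≠ e) (hPj : P j → P e)
    (hmax : ∀ i ∈ s, P i → P e → i ≤ e) :
    numCyclesIn (σ * swap e j) (fun i => i ∈ s ∧ P i) =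
      numCyclesIn σ (fun i => i ∈ s.erase e ∧ P i) := by
  classical
  set τ := σ * swap e j
  have hτj : τ⁻¹ e = j := inv_eq_iff_eq.2 (by simp [τ, he])
  simp only [numCyclesIn]
  congr 1
  ext i
  simp only [mem_filter, mem_univ, true_and]
  constructor
  · rintro ⟨h, hle⟩
    have hie : i ≠ e := by
      rintro rfl
      -- the cycle of `e` under `τ` passes through `j`, which is not above `e`
      obtain ⟨m, hm⟩ := τ.exists_pow_apply_eq_inv_apply i 0
      rw [pow_zero, one_apply, hτj] at hm
      have hjs := h m
      rw [hm] at hjs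
      exact hje (le_antisymm (hmax j hjs.1 hjs.2 (h 0).2) (hm ▸ hle m))
    refine ⟨fun k => ?_, fun k => ?_⟩ <;>
      obtain ⟨m, hm⟩ := exists_mul_swap_pow_apply_eq (j := j) he hie k
    · exact ⟨mem_erase.2 ⟨pow_apply_ne_of_apply_eq_self he hie k, hm ▸ (h m).1⟩, hm ▸ (h m).2⟩
    · exact hm ▸ hle m
  · rintro ⟨h, hle⟩
    have hi := h 0
    simp only [pow_zero, one_apply, mem_erase] at hi
    refine ⟨fun k => ?_, fun k => ?_⟩ <;>
      rcases mul_swap_pow_apply_eq_or (j := j) he hi.1.1 k with ⟨hke, m, hmj⟩ | ⟨m, hm⟩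
    · exact hke ▸ ⟨hes, hPj (hmj ▸ (h m).2)⟩
    · exact hm ▸ ⟨mem_of_mem_erase (h m).1, (h m).2⟩
    · exact hke ▸ hmax i hi.1.2 hi.2 (hPj (hmj ▸ (h m).2))
    · exact hm ▸ hle m

end CycleCount

end Equiv.Perm

theorem Finset.sum_ite_eq_add_card_erase {α M : Type*} [DecidableEq α] [AddCommMonoidWithOne M]
    {t : Finset α} {e : α} (he : e ∈ t) (y : M) :
    ∑ j ∈ t, (if j = e then y else 1) = y + #(t.erase e) := by
  rw [← add_sum_erase _ _ he, if_pos rfl,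
    sum_congr rfl fun j hj => if_neg (ne_of_mem_erase hj), sum_const, nsmul_one]

theorem prod_prod_Ico_card_filter_erase {α β M : Type*} [DecidableEq α] [Fintype β]
    [DecidableEq β] [CommSemiring M] (bl : α → β) (x : β → M) {R s : Finset α} {e : α}
    (hRs : R ⊆ s.erase e) (hes : e ∈ s) :
    ∏ a, ∏ k ∈ Ico #{i ∈ R | bl i = a} #{i ∈ s | bl i = a}, (x a + k) =
      (∏ a, ∏ k ∈ Ico #{i ∈ R | bl i = a} #{i ∈ s.erase e | bl i = a}, (x a + k)) *
        (x (bl e) + #{i ∈ s.erase e | bl i = bl e}) := by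
  have hfactor : ∀ a, ∏ k ∈ Ico #{i ∈ R | bl i = a} #{i ∈ s | bl i = a}, (x a + k) =
      (∏ k ∈ Ico #{i ∈ R | bl i = a} #{i ∈ s.erase e | bl i = a}, (x a + k)) *
        if a = bl e then x a + #{i ∈ s.erase e | bl i = a} else 1 := by
    intro a
    rw [filter_erase]
    split_ifs with ha
    · subst ha
      have heb : e ∈ {i ∈ s | bl i = bl e} := mem_filter.2 ⟨hes, rfl⟩
      rw [← card_erase_add_one heb, prod_Ico_succ_top]
      rw [← filter_erase]
      exact card_le_card (filter_subset_filter _ hRs)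
    · rw [erase_eq_of_notMem fun h => ha (mem_filter.1 h).2.symm, mul_one]
  rw [prod_congr rfl fun a _ => hfactor a, prod_mul_distrib, prod_ite_eq', if_pos (mem_univ _)]

theorem prod_Ico_neg_natCast_add {A : Type*} [CommRing A] {r N : ℕ} (h : r ≤ N) :
    ∏ k ∈ Ico r N, (-(N : A) + k) = (-1) ^ (N - r) * ((N - r).factorial : A) := by
  obtain ⟨d, rfl⟩ := Nat.exists_eq_add_of_le h
  clear h
  rw [Nat.add_sub_cancel_left]
  induction d generalizing r with
  | zero => simp
  | succ d ih =>
    rw [prod_eq_prod_Ico_succ_bot (by omega), show r + (d + 1) = r + 1 + d by omega, ih,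
      Nat.factorial_succ]
    push_cast
    ring

section Counting

open Equiv.Perm

variable {α β M : Type*} {bl : α → β} {R s : Finset α} {σ τ : Perm α} {e j : α}

structure IsAdmissible (bl : α → β) (R s : Finset α) (σ : Perm α) : Prop where
  apply_eq_self_of_notMem : ∀ i ∉ s, σ i = i
  block_apply : ∀ i, bl (σ i) = bl i
  pow_apply_eq_self_of_mem : ∀ i ∈ R, ∀ k : ℕ, (σ ^ k) i ∈ R → (σ ^ k) i = i

theorem IsAdmissible.inv_apply_mem (hτ : IsAdmissible bl R s τ) (hes : e ∈ s) :
    τ⁻¹ e ∈ s ∧ bl (τ⁻¹ e) = bl e := by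
  refine ⟨by_contra fun h => h ?_, by simpa using (hτ.block_apply (τ⁻¹ e)).symm⟩
  have hfix : τ (τ⁻¹ e) = τ⁻¹ e := hτ.apply_eq_self_of_notMem _ h
  rwa [show τ⁻¹ e = e by simpa using hfix.symm]

variable [LinearOrder α]

theorem IsAdmissible.mul_swap (hσ : IsAdmissible bl R (s.erase e) σ) (hes : e ∈ s)
    (heR : e ∉ R) (hjs : j ∈ s) (hj : bl j = bl e) : IsAdmissible bl R s (σ * swap e j) where
  apply_eq_self_of_notMem i hi := by
    rw [mul_apply, swap_apply_of_ne_of_ne (ne_of_mem_of_not_mem hes hi).symm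
      (ne_of_mem_of_not_mem hjs hi).symm, hσ.apply_eq_self_of_notMem i (mt mem_of_mem_erase hi)]
  block_apply i := by rw [mul_apply, hσ.block_apply, apply_swap_eq_self hj.symm]
  pow_apply_eq_self_of_mem i hiR k hk := by
    have he : σ e = e := hσ.apply_eq_self_of_notMem e (notMem_erase e s)
    rcases mul_swap_pow_apply_eq_or (j := j) he (ne_of_mem_of_not_mem hiR heR) k with
      ⟨hke, -⟩ | ⟨m, hm⟩
    · exact absurd (hke ▸ hk) heR
    · rw [hm] at hk ⊢
      exact hσ.pow_apply_eq_self_of_mem i hiR m hk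

theorem IsAdmissible.mul_swap_inv_apply (hτ : IsAdmissible bl R s τ) (heR : e ∉ R) :
    IsAdmissible bl R (s.erase e) (τ * swap e (τ⁻¹ e)) := by
  have hτe : τ (τ⁻¹ e) = e := by simp
  have he : (τ * swap e (τ⁻¹ e)) e = e := by rw [mul_apply, swap_apply_left, hτe]
  refine ⟨fun i hi => ?_, fun i => ?_, fun i hiR k hk => ?_⟩
  · rcases eq_or_ne i e with rfl | hie
    · exact he
    · have his : i ∉ s := fun h => hi (mem_erase.2 ⟨hie, h⟩)
      have hfix := hτ.apply_eq_self_of_notMem i his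
      have hij : i ≠ τ⁻¹ e := fun h => hie (by rw [← hfix, h, hτe])
      rw [mul_apply, swap_apply_of_ne_of_ne hie hij, hfix]
  · have hbl : bl e = bl (τ⁻¹ e) := by simpa using hτ.block_apply (τ⁻¹ e)
    rw [mul_apply, hτ.block_apply, apply_swap_eq_self hbl]
  · obtain ⟨m, hm⟩ :=
      exists_mul_swap_pow_apply_eq (j := τ⁻¹ e) he (ne_of_mem_of_not_mem hiR heR) k
    rw [mul_swap_mul_self] at hm
    rw [← hm] at hk ⊢
    exact hτ.pow_apply_eq_self_of_mem i hiR m hk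

variable [Fintype α]

noncomputable def admissiblePerms (bl : α → β) (R s : Finset α) : Finset (Perm α) :=
  open Classical in {σ | IsAdmissible bl R s σ}

theorem mem_admissiblePerms : σ ∈ admissiblePerms bl R s ↔ IsAdmissible bl R s σ := by
  simp [admissiblePerms]

theorem admissiblePerms_self : admissiblePerms bl R R = {1} := by
  ext σ
  rw [mem_admissiblePerms, mem_singleton]
  refine ⟨fun hσ => Equiv.ext fun i => ?_, ?_⟩
  · by_contra hne
    have hiR : i ∈ R := by_contra fun h => hne (hσ.apply_eq_self_of_notMem i h)
    have hσiR : (σ ^ 1) i ∈ R :=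
      by_contra fun h => hne (σ.injective (hσ.apply_eq_self_of_notMem _ (by simpa using h)))
    exact hne (by simpa using hσ.pow_apply_eq_self_of_mem i hiR 1 hσiR)
  · rintro rfl
    exact ⟨fun _ _ => rfl, fun _ => rfl, fun i _ k _ => by simp⟩

theorem sum_admissiblePerms_eq_sum_sum_mul_swap {N : Type*} [AddCommMonoid N] [DecidableEq β]
    (f : Perm α → N) (hes : e ∈ s) (heR : e ∉ R) :
    ∑ τ ∈ admissiblePerms bl R s, f τ =
      ∑ j ∈ s with bl j = bl e, ∑ σ ∈ admissiblePerms bl R (s.erase e), f (σ * swap e j) := by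
  rw [← sum_product']
  refine sum_nbij' (fun τ => (τ⁻¹ e, τ * swap e (τ⁻¹ e))) (fun p => p.2 * swap e p.1)
    (fun τ hτ => ?_) (fun p hp => ?_) (fun τ _ => mul_swap_mul_self _ _ _) (fun p hp => ?_)
    (fun τ _ => by rw [mul_swap_mul_self])
  · rw [mem_admissiblePerms] at hτ
    obtain ⟨hs, hbl⟩ := hτ.inv_apply_mem hes
    exact mem_product.2 ⟨mem_filter.2 ⟨hs, hbl⟩,
      mem_admissiblePerms.2 (hτ.mul_swap_inv_apply heR)⟩
  · obtain ⟨hj, hσ⟩ := mem_product.1 hp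
    exact mem_admissiblePerms.2 ((mem_admissiblePerms.1 hσ).mul_swap hes heR
      (mem_filter.1 hj).1 (mem_filter.1 hj).2)
  · have he : p.2 e = e :=
      (mem_admissiblePerms.1 (mem_product.1 hp).2).apply_eq_self_of_notMem e (notMem_erase e s)
    have hinv : (p.2 * swap e p.1)⁻¹ e = p.1 := inv_eq_iff_eq.2 (by simp [he])
    simp only [hinv, mul_swap_mul_self]

noncomputable def cycleWeight [Fintype β] [CommMonoid M] (x : β → M) (bl : α → β)
    (R s : Finset α) (σ : Perm α) : M :=
  ∏ a, x a ^ σ.numCyclesIn (fun i => i ∈ s ∧ bl i = a ∧ i ∉ R)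

variable [CommSemiring M] [Fintype β]

theorem cycleWeight_one_self (x : β → M) : cycleWeight x bl R R 1 = 1 := by
  classical
  refine prod_eq_one fun a _ => ?_
  rw [numCyclesIn, card_eq_zero.2 (filter_eq_empty_iff.2 fun i _ h => ?_), pow_zero]
  obtain ⟨hiR, -, hiR'⟩ : i ∈ R ∧ bl i = a ∧ i ∉ R := by simpa using h.1 0
  exact hiR' hiR

theorem cycleWeight_mul_swap (x : β → M) (hσ : IsAdmissible bl R (s.erase e) σ) (hes : e ∈ s)
    (heR : e ∉ R) (hmax : ∀ i ∈ s, i ∉ R → i ≤ e) (hj : bl j = bl e) :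
    cycleWeight x bl R s (σ * swap e j) =
      (if j = e then x (bl e) else 1) * cycleWeight x bl R (s.erase e) σ := by
  classical
  have he : σ e = e := hσ.apply_eq_self_of_notMem e (notMem_erase e s)
  by_cases hje : j = e
  · rw [hje, if_pos rfl, swap_self, ← Perm.one_def, mul_one]
    simp only [cycleWeight, numCyclesIn_of_apply_eq_self he hes, pow_add, prod_mul_distrib,
      heR, not_false_eq_true, and_true, pow_ite, pow_one, pow_zero, prod_ite_eq, mem_univ,
      if_true]
    exact mul_comm _ _
  · rw [if_neg hje, one_mul]
    refine prod_congr rfl fun a _ => ?_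
    rw [numCyclesIn_mul_swap he hes hje (fun h => ⟨hj ▸ h.1, heR⟩)
      (fun i his hi _ => hmax i his hi.2)]

variable [DecidableEq β]

theorem sum_cycleWeight_admissiblePerms (x : β → M) (hRs : R ⊆ s) :
    ∑ σ ∈ admissiblePerms bl R s, cycleWeight x bl R s σ =
      ∏ a, ∏ k ∈ Ico #{i ∈ R | bl i = a} #{i ∈ s | bl i = a}, (x a + k) := by
  induction s using Finset.strongInduction with
  | _ s ih =>
  rcases (s \ R).eq_empty_or_nonempty with hsR | hne
  · obtain rfl : s = R := (sdiff_eq_empty_iff_subset.1 hsR).antisymm hRs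
    simp [admissiblePerms_self, cycleWeight_one_self]
  -- removing the largest point outside `R` keeps the least elements of the other cycles
  obtain ⟨e, he, hmax⟩ : ∃ e ∈ s \ R, ∀ i ∈ s, i ∉ R → i ≤ e :=
    ⟨_, max'_mem _ hne, fun i his hiR => le_max' _ _ (mem_sdiff.2 ⟨his, hiR⟩)⟩
  obtain ⟨hes, heR⟩ := mem_sdiff.1 he
  have hRe : R ⊆ s.erase e := fun i hi => mem_erase.2 ⟨ne_of_mem_of_not_mem hi heR, hRs hi⟩
  calc ∑ τ ∈ admissiblePerms bl R s, cycleWeight x bl R s τ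
      = ∑ j ∈ s with bl j = bl e, ∑ σ ∈ admissiblePerms bl R (s.erase e),
          cycleWeight x bl R s (σ * swap e j) := sum_admissiblePerms_eq_sum_sum_mul_swap _ hes heR
    _ = ∑ j ∈ s with bl j = bl e, (if j = e then x (bl e) else 1) *
          ∑ σ ∈ admissiblePerms bl R (s.erase e), cycleWeight x bl R (s.erase e) σ := by
      refine sum_congr rfl fun j hj => ?_
      rw [mul_sum]
      exact sum_congr rfl fun σ hσ => cycleWeight_mul_swap x (mem_admissiblePerms.1 hσ) hes heR
        hmax (mem_filter.1 hj).2
    _ = (x (bl e) + #{i ∈ s.erase e | bl i = bl e}) *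
          ∏ a, ∏ k ∈ Ico #{i ∈ R | bl i = a} #{i ∈ s.erase e | bl i = a}, (x a + k) := by
      have heb : e ∈ {i ∈ s | bl i = bl e} := mem_filter.2 ⟨hes, rfl⟩
      rw [← sum_mul, ih _ (erase_ssubset hes) hRe, sum_ite_eq_add_card_erase heb, filter_erase]
    _ = _ := by rw [mul_comm, prod_prod_Ico_card_filter_erase bl x hRe hes]

end Counting

section Kinematic

open Equiv.Perm

variable {n p : ℕ} {bl : Fin n → Fin p} {σ δ : Perm (Fin n)}

theorem isLeast_tmin {i : Fin n} (h : ∃ k, 0 < k ∧ k ≤ n ∧ bl ((σ ^ k) i) ≠ bl i) :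
    IsLeast {k | 0 < k ∧ bl ((σ ^ k) i) ≠ bl i} (tmin bl σ i) := by
  set S := (Icc 1 n).filter fun k => bl ((σ ^ k) i) ≠ bl i
  obtain ⟨k, hk, hkn, hki⟩ := h
  have hS : S.Nonempty := ⟨k, mem_filter.2 ⟨mem_Icc.2 ⟨hk, hkn⟩, hki⟩⟩
  have htmin : tmin bl σ i = S.min' hS := by rw [tmin, ← coe_min' hS]; rfl
  obtain ⟨hmem, hne⟩ := mem_filter.1 (S.min'_mem hS)
  rw [htmin]
  refine ⟨⟨(mem_Icc.1 hmem).1, hne⟩, fun j ⟨hj, hji⟩ => ?_⟩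
  by_cases hjn : j ≤ n
  · exact S.min'_le j (mem_filter.2 ⟨mem_Icc.2 ⟨hj, hjn⟩, hji⟩)
  · exact (mem_Icc.1 hmem).2.trans (le_of_not_ge hjn)

theorem tmin_eq_of_isLeast {i : Fin n} {m : ℕ}
    (hm : IsLeast {k | 0 < k ∧ bl ((σ ^ k) i) ≠ bl i} m) (hmn : m ≤ n) : tmin bl σ i = m :=
  (isLeast_tmin ⟨m, hm.1.1, hmn, hm.1.2⟩).unique hm

theorem exists_exit_of_mem_Rsig {i : Fin n} (hi : i ∈ Rsig bl σ) :
    ∃ k, 0 < k ∧ k ≤ n ∧ bl ((σ ^ k) i) ≠ bl i := by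
  replace hi : bl (σ⁻¹ i) ≠ bl i := (mem_filter.1 hi).2
  obtain ⟨d, hd, hdn, hdi⟩ := σ.exists_pos_pow_apply_eq_self_le_card i
  have hpred : (σ ^ (d - 1)) i = σ⁻¹ i := by
    rw [Perm.eq_inv_iff_eq, ← mul_apply, ← pow_succ', Nat.sub_add_cancel hd, hdi]
  refine ⟨d - 1, Nat.pos_of_ne_zero fun h0 => hi ?_, by simp at hdn; omega, hpred ▸ hi⟩
  rw [← hpred, h0, pow_zero, one_apply]

theorem Rsig_mul (hkin : ∀ i ∈ δ.support, bl (δ i) ≠ bl i) (hσ : ∀ i, bl (σ i) = bl i) :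
    Rsig bl (δ * σ) = δ.support := by
  have hσinv : ∀ i, bl (σ⁻¹ i) = bl i := fun i => by simpa using (hσ (σ⁻¹ i)).symm
  ext i
  simp only [Rsig, mem_filter, mem_univ, true_and, mul_inv_rev, mul_apply, hσinv]
  by_cases hi : i ∈ δ.support
  · have hδi : δ⁻¹ i ∈ δ.support := by
      rw [Perm.mem_support] at hi ⊢
      simpa using fun h => hi (inv_eq_iff_eq.1 h.symm).symm
    simpa [hi, eq_comm] using hkin _ hδi
  · simp [hi, inv_eq_iff_eq.2 (notMem_support.1 hi).symm]

theorem tmin_mul_of_first_return (hkin : ∀ i ∈ δ.support, bl (δ i) ≠ bl i)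
    (hσ : ∀ i, bl (σ i) = bl i) {i : Fin n} {m : ℕ} (hm : 0 < m) (hmn : m ≤ n)
    (hmR : (σ ^ m) i ∈ δ.support) (hfirst : ∀ k, 0 < k → k < m → (σ ^ k) i ∉ δ.support) :
    tmin bl (δ * σ) i = m ∧ ((δ * σ) ^ m) i = δ ((σ ^ m) i) := by
  have hfix : ∀ k, 0 < k → k < m → δ ((σ ^ k) i) = (σ ^ k) i :=
    fun k hk hkm => notMem_support.1 (hfirst k hk hkm)
  have hpow : ((δ * σ) ^ m) i = δ ((σ ^ m) i) := by
    have := mul_pow_succ_apply (k := m - 1) fun j hj hjm => hfix j hj (by omega)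
    rwa [Nat.sub_add_cancel hm] at this
  refine ⟨tmin_eq_of_isLeast ⟨⟨hm, ?_⟩, fun k ⟨hk, hki⟩ => ?_⟩ hmn, hpow⟩
  · rw [hpow, ← apply_pow_apply_eq_of_apply_apply_eq hσ m i]
    exact hkin _ hmR
  · by_contra! hkm
    rw [mul_pow_apply_of_apply_eq_self fun j hj hjk => hfix j hj (by omega),
      apply_pow_apply_eq_of_apply_apply_eq hσ] at hki
    exact hki rfl

theorem exists_first_return_le {R : Finset (Fin n)} {i : Fin n} (σ : Perm (Fin n)) (hi : i ∈ R) :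
    ∃ m, 0 < m ∧ m ≤ n ∧ (σ ^ m) i ∈ R ∧ ∀ k, 0 < k → k < m → (σ ^ k) i ∉ R := by
  simpa using σ.exists_first_return hi

theorem IsAdmissible.kinematicPart_mul (hkin : ∀ i ∈ δ.support, bl (δ i) ≠ bl i)
    (hσ : IsAdmissible bl δ.support univ σ) :
    Rsig bl (δ * σ) = δ.support ∧ ∀ i ∈ δ.support, δ i = ((δ * σ) ^ tmin bl (δ * σ) i) i := by
  refine ⟨Rsig_mul hkin hσ.block_apply, fun i hi => ?_⟩
  obtain ⟨m, hm, hmn, hmR, hfirst⟩ := exists_first_return_le σ hi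
  obtain ⟨ht, hpow⟩ := tmin_mul_of_first_return hkin hσ.block_apply hm hmn hmR hfirst
  rw [ht, hpow, hσ.pow_apply_eq_self_of_mem i hi m hmR]

theorem block_inv_mul_apply (hR : Rsig bl σ = δ.support)
    (hδ : ∀ i ∈ δ.support, δ i = (σ ^ tmin bl σ i) i) (i : Fin n) : bl ((δ⁻¹ * σ) i) = bl i := by
  rw [mul_apply]
  by_cases hσi : σ i ∈ δ.support
  · set x := δ⁻¹ (σ i)
    have hx : x ∈ δ.support := by
      rw [Perm.mem_support] at hσi ⊢
      simpa [x] using fun h => hσi (inv_eq_iff_eq.1 h.symm).symm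
    obtain ⟨⟨ht, -⟩, hleast⟩ := isLeast_tmin (exists_exit_of_mem_Rsig (hR ▸ hx))
    -- `σ i = δ x` is the first exit of the orbit of `x` from its block, so `i` is still in it
    have hσx : (σ ^ tmin bl σ x) x = σ i := by rw [← hδ x hx]; simp [x]
    have hi : (σ ^ (tmin bl σ x - 1)) x = i :=
      σ.injective (by rw [← mul_apply, ← pow_succ', Nat.sub_add_cancel ht, hσx])
    rcases Nat.eq_zero_or_pos (tmin bl σ x - 1) with h0 | hpos
    · rw [← hi, h0, pow_zero, one_apply]
    · by_contra hne
      have := hleast ⟨hpos, by rwa [hi, ne_comm]⟩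
      omega
  · have hσi' : σ i ∉ Rsig bl σ := hR ▸ hσi
    rw [inv_eq_iff_eq.2 (notMem_support.1 hσi).symm]
    simpa [Rsig, eq_comm] using hσi'

theorem isAdmissible_inv_mul (hkin : ∀ i ∈ δ.support, bl (δ i) ≠ bl i)
    (hR : Rsig bl σ = δ.support) (hδ : ∀ i ∈ δ.support, δ i = (σ ^ tmin bl σ i) i) :
    IsAdmissible bl δ.support univ (δ⁻¹ * σ) := by
  have hblock := block_inv_mul_apply hR hδ
  refine ⟨fun i hi => absurd (mem_univ i) hi, hblock, fun i hi k hk => ?_⟩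
  obtain ⟨m, hm, hmn, hmR, hfirst⟩ := exists_first_return_le (δ⁻¹ * σ) hi
  obtain ⟨ht, hpow⟩ := tmin_mul_of_first_return hkin hblock hm hmn hmR hfirst
  rw [mul_inv_cancel_left] at ht hpow
  have hmi : ((δ⁻¹ * σ) ^ m) i = i := δ.injective (by rw [← hpow, ← ht, ← hδ i hi])
  exact pow_apply_eq_self_of_first_return hm hmi hfirst hk

theorem numCyclesIn_block_mul (hkin : ∀ i ∈ δ.support, bl (δ i) ≠ bl i)
    (hσ : ∀ i, bl (σ i) = bl i) (a : Fin p) :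
    (δ * σ).numCyclesIn (fun i => bl i = a) =
      σ.numCyclesIn (fun i => bl i = a ∧ i ∉ δ.support) := by
  classical
  simp only [numCyclesIn]
  congr 1
  ext i
  simp only [mem_filter, mem_univ, true_and]
  constructor
  · rintro ⟨h, hle⟩
    -- a cycle of `δ * σ` inside one block contains no point of `Rsig bl (δ * σ) = δ.support`
    have hnot : ∀ k, ((δ * σ) ^ k) i ∉ δ.support := by
      intro k hk
      rw [← Rsig_mul hkin hσ] at hk
      obtain ⟨m, hm⟩ := (δ * σ).exists_pow_apply_eq_inv_apply i k
      exact (mem_filter.1 hk).2 (by rw [← hm, h, h])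
    have heq : ∀ k, (σ ^ k) i = ((δ * σ) ^ k) i := fun k => by
      simpa using mul_pow_apply_of_apply_eq_self (δ := δ⁻¹) (σ := δ * σ) (k := k)
        fun j _ _ => inv_eq_iff_eq.2 (notMem_support.1 (hnot j)).symm
    exact ⟨fun k => heq k ▸ ⟨h k, hnot k⟩, fun k => heq k ▸ hle k⟩
  · rintro ⟨h, hle⟩
    have heq : ∀ k, ((δ * σ) ^ k) i = (σ ^ k) i := fun k =>
      mul_pow_apply_of_apply_eq_self fun j _ _ => notMem_support.1 (h j).2
    exact ⟨fun k => heq k ▸ (h k).1, fun k => heq k ▸ hle k⟩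

theorem cyclesInBlock_eq_numCyclesIn (bl : Fin n → Fin p) (σ : Perm (Fin n)) (a : Fin p) :
    cyclesInBlock bl σ a = σ.numCyclesIn (fun i => bl i = a) := by
  classical
  simp only [cyclesInBlock, numCyclesIn]
  congr 1
  ext i
  simp only [mem_filter, mem_univ, true_and, mem_range]
  refine ⟨fun ⟨h, hle⟩ => ⟨σ.pow_apply_of_forall_lt_card i (Q := (bl · = a)) ?_,
    σ.pow_apply_of_forall_lt_card i (Q := (i ≤ ·)) ?_⟩,
    fun ⟨h, hle⟩ => ⟨fun k _ => h k, fun k _ => hle k⟩⟩ <;> simpa using ‹_›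

theorem sum_prod_pow_cyclesInBlock_eq_sum_cycleWeight {M : Type*} [CommSemiring M]
    (hkin : ∀ i ∈ δ.support, bl (δ i) ≠ bl i) (x : Fin p → M) :
    ∑ σ ∈ univ.filter (fun σ : Perm (Fin n) =>
        Rsig bl σ = δ.support ∧ ∀ i ∈ δ.support, δ i = (σ ^ tmin bl σ i) i),
      ∏ a, x a ^ cyclesInBlock bl σ a =
    ∑ σ ∈ admissiblePerms bl δ.support univ, cycleWeight x bl δ.support univ σ := by
  refine sum_nbij' (δ⁻¹ * ·) (δ * ·) (fun σ hσ => ?_) (fun σ hσ => ?_)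
    (fun σ _ => mul_inv_cancel_left δ σ) (fun σ _ => inv_mul_cancel_left δ σ) (fun σ hσ => ?_)
  · obtain ⟨hR, hδ⟩ := (mem_filter.1 hσ).2
    exact mem_admissiblePerms.2 (isAdmissible_inv_mul hkin hR hδ)
  · exact mem_filter.2 ⟨mem_univ _, (mem_admissiblePerms.1 hσ).kinematicPart_mul hkin⟩
  · obtain ⟨hR, hδ⟩ := (mem_filter.1 hσ).2
    have hcycles := numCyclesIn_block_mul hkin (isAdmissible_inv_mul hkin hR hδ).block_apply
    simp only [mul_inv_cancel_left] at hcycles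
    simp only [cycleWeight, mem_univ, true_and, cyclesInBlock_eq_numCyclesIn, hcycles]

end Kinematic

theorem sum_over_perms_with_given_kinematic_part_general
    (p : ℕ) (nv : Fin p → ℕ)
    (n : ℕ) (hn : n = ∑ a, nv a)
    (bl : Fin n → Fin p)
    (hcard : ∀ a, (Finset.univ.filter fun i => bl i = a).card = nv a)
    (R : Finset (Fin n)) (δ : Equiv.Perm (Fin n))
    (hδkin : ∀ i ∈ R, bl (δ i) ≠ bl i) (hδfix : ∀ i ∉ R, δ i = i) :
    ∑ σ ∈ Finset.univ.filter (fun σ : Equiv.Perm (Fin n) =>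
        Rsig bl σ = R ∧ ∀ i ∈ R, δ i = (σ ^ tmin bl σ i) i),
      ∏ a, (-(nv a : ℤ)) ^ cyclesInBlock bl σ a =
    (-1 : ℤ) ^ (n + R.card) *
      ∏ a, ((nv a - (R.filter fun i => bl i = a).card).factorial : ℤ) := by
  obtain rfl := Perm.support_eq_of_block_apply_ne hδkin hδfix
  have hr : ∀ a, #{i ∈ δ.support | bl i = a} ≤ nv a :=
    fun a => hcard a ▸ card_le_card (filter_subset_filter _ (subset_univ _))
  rw [sum_prod_pow_cyclesInBlock_eq_sum_cycleWeight hδkin,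
    sum_cycleWeight_admissiblePerms _ (subset_univ _),
    prod_congr rfl fun a _ => by rw [hcard a, prod_Ico_neg_natCast_add (hr a)],
    prod_mul_distrib, prod_pow_eq_pow_sum, sum_tsub_distrib _ fun a _ => hr a, ← hn,
    ← card_eq_sum_card_fiberwise fun i _ => mem_univ (bl i)]
  have hR : #δ.support ≤ n := by simpa using card_le_univ δ.support
  rw [show n + #δ.support = n - #δ.support + 2 * #δ.support by omega, pow_add, pow_mul]
  norm_num

/-- For a subset `R` of `{1,…,n}` and a kinematic permutation `δ`
of `R` (encoded as a permutation of `{1,…,n}` fixing the complement of `R` and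
changing block on `R`),
`Σ_{σ : R_σ = R, δ_σ = δ} ∏_a (−n_a)^{ℓ_a(σ)} = (−1)^{n+|R|} ∏_a (n_a − |R ∩ I_a|)!`,
where `δ_σ(i) = σ^{t(σ,i)}(i)` on `R_σ`. The partition of `{1,…,n}` into
consecutive intervals `I₁,…,I_p` with `|I_a| = n_a` is encoded by the monotone
map `bl` with fiber cardinalities `nv a`. -/
theorem sum_over_perms_with_given_kinematic_part
    (p : ℕ) (hp : 1 ≤ p) (nv : Fin p → ℕ) (hnv : ∀ a, 1 ≤ nv a)
    (n : ℕ) (hn : n = ∑ a, nv a)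
    (bl : Fin n → Fin p) (hbl : Monotone bl)
    (hcard : ∀ a, (Finset.univ.filter fun i => bl i = a).card = nv a)
    (R : Finset (Fin n)) (δ : Equiv.Perm (Fin n))
    (hδkin : ∀ i ∈ R, bl (δ i) ≠ bl i) (hδfix : ∀ i ∉ R, δ i = i) :
    ∑ σ ∈ Finset.univ.filter (fun σ : Equiv.Perm (Fin n) =>
        Rsig bl σ = R ∧ ∀ i ∈ R, δ i = (σ ^ tmin bl σ i) i),
      ∏ a, (-(nv a : ℤ)) ^ cyclesInBlock bl σ a =
    (-1 : ℤ) ^ (n + R.card) *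
      ∏ a, ((nv a - (R.filter fun i => bl i = a).card).factorial : ℤ) :=
  sum_over_perms_with_given_kinematic_part_general p nv n hn bl hcard R δ hδkin hδfix
end

section
/- Suppose every vertex v ∈ V has exactly one outgoing edge e_v, and suppose G has a unique simple directed cycle, namely c = the rotation class of (e_{v_1},…,e_{v_k}) where v_1,…,v_k are distinct vertices with t(e_{v_i}) = v_{i+1} (indices mod k). Then for any edge weights and any representation (U_e)_{e∈E}, det Δ = ( ∏_{v ∈ V} x_{e_v}^{n_v} ) · det( I_{n_{v_1}} − U_{e_{v_1}} U_{e_{v_2}} ⋯ U_{e_{v_k}} ). -/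
open Matrix

/-- The index set `⊔_v {v} × {1,…,n_v}` of the canonical basis of `⊕_v ℂ^{n_v}`. -/
abbrev QIdx (p : ℕ) (nv : Fin p → ℕ) := Σ v : Fin p, Fin (nv v)

/-- The diagonal projection onto the block of the vertex `u`. -/
def qProj (p : ℕ) (nv : Fin p → ℕ) (u : Fin p) : Matrix (QIdx p nv) (QIdx p nv) ℂ :=
  Matrix.of fun q r => if q = r ∧ q.1 = u then 1 else 0

/-- The matrix `U e`, padded by zeros to an endomorphism of `⊕_v ℂ^{n_v}`
(supported on rows in the block of `s e` and columns in the block of `t e`). -/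
def qPadU (p m : ℕ) (s t : Fin m → Fin p) (nv : Fin p → ℕ)
    (U : ∀ e : Fin m, Matrix (Fin (nv (s e))) (Fin (nv (t e))) ℂ) (e : Fin m) :
    Matrix (QIdx p nv) (QIdx p nv) ℂ :=
  Matrix.of fun q r =>
    if hq : q.1 = s e then
      if hr : r.1 = t e then
        U e (Fin.cast (congrArg nv hq) q.2) (Fin.cast (congrArg nv hr) r.2)
      else 0
    else 0

/-- The matrix of the twisted Laplacian `Δ` in the canonical basis:
`(Δf)(v) = Σ_{e : s e = v} x_e (f (s e) − U_e f (t e))`, i.e.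
`Δ = Σ_e x_e (P_{s e} − Ũ_e)`. Its blocks are `Δ_{[uu]} = z_u I` and
`Δ_{[uv]} = −Σ_{e : u→v} x_e U_e` for `u ≠ v`. -/
noncomputable def qLap (p m : ℕ) (s t : Fin m → Fin p) (x : Fin m → ℂ) (nv : Fin p → ℕ)
    (U : ∀ e : Fin m, Matrix (Fin (nv (s e))) (Fin (nv (t e))) ℂ) :
    Matrix (QIdx p nv) (QIdx p nv) ℂ :=
  ∑ e, x e • (qProj p nv (s e) - qPadU p m s t nv U e)

/-- `z_u = Σ_{e : s e = u} x_e`. -/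
noncomputable def qz (p m : ℕ) (s : Fin m → Fin p) (x : Fin m → ℂ) (u : Fin p) : ℂ :=
  ∑ e ∈ Finset.univ.filter (fun e => s e = u), x e

/-- A cycle on the quiver: a nonempty list of edges `[e₁,…,e_k]` with
`t eᵢ = s eᵢ₊₁` (cyclically), chosen to be the (lexicographically) least
representative of its rotation class, so that cycles (rotation classes) are
in bijection with such lists. -/
def IsQCycle (p m : ℕ) (s t : Fin m → Fin p) (l : List (Fin m)) : Prop :=
  l ≠ [] ∧ l.Chain' (fun e f => t e = s f) ∧ l.getLast?.map t = l.head?.map s ∧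
    ∀ k, l ≤ l.rotate k

/-- The type of cycles on the quiver. -/
abbrev QCycle (p m : ℕ) (s t : Fin m → Fin p) := {l : List (Fin m) // IsQCycle p m s t l}

/-- The holonomy `hol(c) = U_{e₁} ⋯ U_{e_k}` of a cycle, computed with the
zero-padded edge matrices: this `n × n` matrix is zero outside the block of the
base vertex `s e₁`, where it equals the genuine holonomy; in particular its
trace, and `det(I − u • hol)`, agree with those of the genuine holonomy. -/
noncomputable def qHol (p m : ℕ) (s t : Fin m → Fin p) (nv : Fin p → ℕ)
    (U : ∀ e : Fin m, Matrix (Fin (nv (s e))) (Fin (nv (t e))) ℂ)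
    (l : List (Fin m)) : Matrix (QIdx p nv) (QIdx p nv) ℂ :=
  (l.map (qPadU p m s t nv U)).prod

/-- `x^{e(c)} = x_{e₁} ⋯ x_{e_k}`. -/
def qxprod {m : ℕ} (x : Fin m → ℂ) (l : List (Fin m)) : ℂ := (l.map x).prod

/-- `v_a(c)`: the number of visits of the cycle at the vertex `a`
(the number of `i` with `s eᵢ = a`). -/
def qvisits (p m : ℕ) (s : Fin m → Fin p) (l : List (Fin m)) (a : Fin p) : ℕ :=
  (l.map s).count a

/-- `val(c)`: the cardinality of the stabilizer of `(e₁,…,e_k)` under the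
rotation action of `ℤ/kℤ`. -/
def qval {m : ℕ} (l : List (Fin m)) : ℕ :=
  ((Finset.range l.length).filter fun k => l.rotate k = l).card

/-- Total number of visits at `a` of a multiset of cycles, with multiplicity. -/
def qmsVisits (p m : ℕ) (s t : Fin m → Fin p) (C : Multiset (QCycle p m s t)) (a : Fin p) : ℕ :=
  (C.map fun c => qvisits p m s c.val a).sum

/-- `C!`: the product of the factorials of the multiplicities of the elements of `C`. -/
def qmsFact (p m : ℕ) (s t : Fin m → Fin p) (C : Multiset (QCycle p m s t)) : ℕ :=
  C.toFinset.prod fun c => (C.count c).factorial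

/-! Write `Δ = D (1 - T)` with `D` the diagonal of the weights `x_{e_v}` and `T = Σ_e Ũ_e`.
Let `P` project onto the block of the base vertex `v 0` of the cycle and put `M = T (1 - P)`:
this is `T` with the edges into `v 0` deleted. Every orbit of `w ↦ t (e_w)` runs into the cycle
and hence into `v 0`, so `M` is nilpotent, and a Schur-complement factorisation gives
`det (1 - T) = det (1 - P (Σ_j Mʲ) T P)`. As every vertex has a single outgoing edge,
`P Mʲ T P` is carried by the walks of length `j + 1` from `v 0` that first return to `v 0` at
their last step; the only one is the cycle, which contributes its holonomy. -/

section Schur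

variable {n R : Type*} [Fintype n] [DecidableEq n] [CommRing R]

theorem Matrix.det_one_sub_of_isNilpotent [IsReduced R] {M : Matrix n n R} (hM : IsNilpotent M) :
    (1 - M).det = 1 := by
  have h := (isNilpotent_charpoly_sub_pow_of_isNilpotent hM).map (Polynomial.evalRingHom 1)
  rw [Polynomial.coe_evalRingHom, Polynomial.eval_sub, eval_charpoly] at h
  simpa [sub_eq_zero] using h.eq_zero

theorem Matrix.det_one_sub_eq_det_one_sub_compression [IsReduced R] {N Q : Matrix n n R}
    (hQ : Q * Q = Q) {r : ℕ} (hr : (N * (1 - Q)) ^ r = 0) :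
    (1 - N).det = (1 - Q * (∑ j ∈ Finset.range r, (N * (1 - Q)) ^ j) * N * Q).det := by
  set M := N * (1 - Q)
  set W := ∑ j ∈ Finset.range r, M ^ j
  have hW : (1 - M) * W = 1 := by rw [mul_neg_geom_sum, hr, sub_zero]
  have hfactor : 1 - N = (1 - M) * (1 - W * N * Q) := by
    rw [mul_sub, mul_one, ← mul_assoc, ← mul_assoc, hW, one_mul]
    simp only [M, mul_sub, mul_one]
    abel
  calc (1 - N).det = (1 - W * N * Q * Q).det := by
        rw [hfactor, det_mul, det_one_sub_of_isNilpotent ⟨r, hr⟩, one_mul, mul_assoc _ Q, hQ]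
    _ = _ := by rw [det_one_sub_mul_comm, mul_assoc, mul_assoc, mul_assoc]

end Schur

theorem Function.exists_iterate_mem_periodicPts {α : Type*} [Finite α] (f : α → α) (x : α) :
    ∃ n, f^[n] x ∈ Function.periodicPts f := by
  obtain ⟨a, b, hne, heq⟩ := Finite.exists_ne_map_eq_of_infinite (f^[·] x)
  wlog hab : a < b generalizing a b
  · exact this b a hne.symm heq.symm (lt_of_le_of_ne (not_lt.mp hab) hne.symm)
  refine ⟨a, Function.mk_mem_periodicPts (Nat.sub_pos_of_lt hab) ?_⟩
  rw [Function.IsPeriodicPt, Function.IsFixedPt, ← Function.iterate_add_apply,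
    Nat.sub_add_cancel hab.le]
  exact heq.symm

section Blocks

variable {p m : ℕ} {s t : Fin m → Fin p} {nv : Fin p → ℕ}
  {U : ∀ e : Fin m, Matrix (Fin (nv (s e))) (Fin (nv (t e))) ℂ}

theorem qProj_eq_diagonal (u : Fin p) :
    qProj p nv u = diagonal fun q => if q.1 = u then 1 else 0 := by
  ext q r
  by_cases h : q = r
  · subst h; simp [qProj]
  · simp [qProj, h]

theorem qProj_mul_qProj (a b : Fin p) :
    qProj p nv a * qProj p nv b = if a = b then qProj p nv a else 0 := by
  split_ifs with h
  · subst h; simp [qProj_eq_diagonal, ← ite_and]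
  · simp only [qProj_eq_diagonal, diagonal_mul_diagonal, mul_ite, mul_one, mul_zero]
    rw [← diagonal_zero]
    congr 1; ext q; split_ifs <;> simp_all

theorem sum_qProj : ∑ u, qProj p nv u = 1 := by
  ext q r
  simp [qProj_eq_diagonal, Matrix.sum_apply, diagonal_apply, one_apply]

theorem qProj_mul_qPadU (u : Fin p) (e : Fin m) :
    qProj p nv u * qPadU p m s t nv U e = if u = s e then qPadU p m s t nv U e else 0 := by
  ext q r
  rw [qProj_eq_diagonal, diagonal_mul]
  split_ifs <;> simp_all [qPadU]

theorem qPadU_mul_qProj (e : Fin m) (u : Fin p) :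
    qPadU p m s t nv U e * qProj p nv u = if u = t e then qPadU p m s t nv U e else 0 := by
  ext q r
  rw [qProj_eq_diagonal, mul_diagonal]
  split_ifs <;> simp_all [qPadU]

theorem qPadU_mul_qProj_target (e : Fin m) :
    qPadU p m s t nv U e * qProj p nv (t e) = qPadU p m s t nv U e := by
  rw [qPadU_mul_qProj, if_pos rfl]

theorem qPadU_mul_one_sub_qProj (e : Fin m) (b : Fin p) :
    qPadU p m s t nv U e * (1 - qProj p nv b) = if t e = b then 0 else qPadU p m s t nv U e := by
  rw [mul_sub, mul_one, qPadU_mul_qProj]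
  split_ifs <;> simp_all [eq_comm]

theorem diagonal_eq_sum_smul_qProj (f : Fin p → ℂ) :
    diagonal (fun q : QIdx p nv => f q.1) = ∑ u, f u • qProj p nv u := by
  ext q r
  simp [qProj_eq_diagonal, Matrix.sum_apply, diagonal_apply]

theorem det_diagonal_fst (f : Fin p → ℂ) :
    (diagonal fun q : QIdx p nv => f q.1).det = ∏ u, f u ^ nv u := by
  simp [det_diagonal, ← Finset.univ_sigma_univ, Finset.prod_sigma]

theorem pow_sum_eq_zero_of_qProj_mul_pow_eq_zero {M : Matrix (QIdx p nv) (QIdx p nv) ℂ}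
    {r : Fin p → ℕ} (h : ∀ u, qProj p nv u * M ^ r u = 0) : M ^ ∑ u, r u = 0 := by
  rw [← one_mul (M ^ _), ← sum_qProj, Finset.sum_mul]
  refine Finset.sum_eq_zero fun u _ => ?_
  rw [← Nat.add_sub_cancel' (Finset.single_le_sum (fun _ _ => Nat.zero_le _)
    (Finset.mem_univ u) : r u ≤ ∑ u, r u), pow_add, ← mul_assoc, h, zero_mul]

end Blocks

noncomputable def qTransfer (p m : ℕ) (s t : Fin m → Fin p) (nv : Fin p → ℕ)
    (U : ∀ e : Fin m, Matrix (Fin (nv (s e))) (Fin (nv (t e))) ℂ) :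
    Matrix (QIdx p nv) (QIdx p nv) ℂ :=
  ∑ e, qPadU p m s t nv U e

section OutDegreeOne

variable {p m : ℕ} {s t : Fin m → Fin p} {nv : Fin p → ℕ}
  {U : ∀ e : Fin m, Matrix (Fin (nv (s e))) (Fin (nv (t e))) ℂ} {out : Fin p → Fin m}

theorem qProj_mul_qTransfer (hout_s : ∀ w, s (out w) = w) (hout : ∀ e, e = out (s e))
    (u : Fin p) : qProj p nv u * qTransfer p m s t nv U = qPadU p m s t nv U (out u) := by
  have hsrc : ∀ e, u = s e ↔ out u = e := fun e =>
    ⟨fun h => h ▸ (hout e).symm, fun h => h ▸ (hout_s u).symm⟩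
  simp only [qTransfer, Finset.mul_sum, qProj_mul_qPadU, hsrc, Finset.sum_ite_eq,
    Finset.mem_univ, if_true]

theorem qLap_eq_diagonal_mul (x : Fin m → ℂ) (hout_s : ∀ w, s (out w) = w)
    (hout : ∀ e, e = out (s e)) :
    qLap p m s t x nv U =
      diagonal (fun q => x (out q.1)) * (1 - qTransfer p m s t nv U) := by
  have hbij : Function.Bijective out :=
    ⟨fun a b h => by rw [← hout_s a, ← hout_s b, h], fun e => ⟨s e, (hout e).symm⟩⟩
  rw [qLap, ← hbij.sum_comp, diagonal_eq_sum_smul_qProj fun u => x (out u), Finset.sum_mul]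
  refine Finset.sum_congr rfl fun u _ => ?_
  rw [smul_mul_assoc, mul_sub, mul_one, qProj_mul_qTransfer hout_s hout, hout_s]

theorem qProj_mul_qTransfer_pow_mul_qProj_iterate (hout_s : ∀ w, s (out w) = w)
    (hout : ∀ e, e = out (s e)) (w : Fin p) (j : ℕ) :
    qProj p nv w * qTransfer p m s t nv U ^ j * qProj p nv ((t ∘ out)^[j] w) =
      qProj p nv w * qTransfer p m s t nv U ^ j := by
  induction j with
  | zero => simp [qProj_mul_qProj]
  | succ j ih =>
    set u := (t ∘ out)^[j] w
    have hstep : qProj p nv u * qTransfer p m s t nv U * qProj p nv (t (out u)) =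
        qProj p nv u * qTransfer p m s t nv U := by
      rw [qProj_mul_qTransfer hout_s hout, qPadU_mul_qProj_target]
    rw [Function.iterate_succ_apply', Function.comp_apply]
    calc qProj p nv w * qTransfer p m s t nv U ^ (j + 1) * qProj p nv (t (out u))
        = qProj p nv w * qTransfer p m s t nv U ^ j * qProj p nv u * qTransfer p m s t nv U *
            qProj p nv (t (out u)) := by rw [ih, pow_succ, ← mul_assoc]
      _ = qProj p nv w * qTransfer p m s t nv U ^ j *
            (qProj p nv u * qTransfer p m s t nv U * qProj p nv (t (out u))) := by
          simp only [mul_assoc]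
      _ = qProj p nv w * qTransfer p m s t nv U ^ (j + 1) := by
          rw [hstep, ← mul_assoc, ih, pow_succ, mul_assoc]

theorem qProj_mul_qTransfer_pow_succ (hout_s : ∀ w, s (out w) = w)
    (hout : ∀ e, e = out (s e)) (w : Fin p) (j : ℕ) :
    qProj p nv w * qTransfer p m s t nv U ^ (j + 1) =
      (List.ofFn fun i : Fin (j + 1) => qPadU p m s t nv U (out ((t ∘ out)^[i] w))).prod := by
  induction j generalizing w with
  | zero => simp [qProj_mul_qTransfer hout_s hout]
  | succ j ih =>
    rw [pow_succ', ← mul_assoc, qProj_mul_qTransfer hout_s hout, ← qPadU_mul_qProj_target,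
      mul_assoc, ih]
    conv_rhs => rw [List.ofFn_succ, List.prod_cons]
    rfl

theorem qProj_mul_pow_eq_zero_of_iterate_eq (hout_s : ∀ w, s (out w) = w)
    (hout : ∀ e, e = out (s e)) {b w : Fin p} {j : ℕ} (h : (t ∘ out)^[j + 1] w = b) :
    qProj p nv w * (qTransfer p m s t nv U * (1 - qProj p nv b)) ^ (j + 1) = 0 := by
  induction j generalizing w with
  | zero => rw [zero_add, pow_one, ← mul_assoc, qProj_mul_qTransfer hout_s hout,
      qPadU_mul_one_sub_qProj, if_pos (show t (out w) = b from h)]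
  | succ j ih =>
    rw [pow_succ', ← mul_assoc, ← mul_assoc, qProj_mul_qTransfer hout_s hout,
      qPadU_mul_one_sub_qProj]
    split_ifs with hb
    · rw [zero_mul]
    · rw [← qPadU_mul_qProj_target, mul_assoc, ih (w := t (out w)) h, mul_zero]

theorem qProj_mul_pow_eq_of_iterate_ne (hout_s : ∀ w, s (out w) = w)
    (hout : ∀ e, e = out (s e)) {b w : Fin p} {j : ℕ}
    (h : ∀ i, 0 < i → i ≤ j → (t ∘ out)^[i] w ≠ b) :
    qProj p nv w * (qTransfer p m s t nv U * (1 - qProj p nv b)) ^ j =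
      qProj p nv w * qTransfer p m s t nv U ^ j := by
  induction j generalizing w with
  | zero => simp
  | succ j ih =>
    have hb : t (out w) ≠ b := h 1 one_pos (by omega)
    rw [pow_succ', pow_succ', ← mul_assoc, ← mul_assoc, ← mul_assoc (qProj _ _ _),
      qProj_mul_qTransfer hout_s hout, qPadU_mul_one_sub_qProj, if_neg hb,
      ← qPadU_mul_qProj_target, mul_assoc, mul_assoc, ih, ← mul_assoc _ (qProj _ _ _)]
    exact fun i hi hij => h (i + 1) (by omega) (by omega)

end OutDegreeOne

section Cycle

open Fin.NatCast

variable {p m k : ℕ} {s t : Fin m → Fin p} {nv : Fin p → ℕ}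
  {U : ∀ e : Fin m, Matrix (Fin (nv (s e))) (Fin (nv (t e))) ℂ} {out : Fin p → Fin m}
  {v : Fin (k + 1) → Fin p}

theorem iterate_apply_cycle (hcyc : ∀ i, t (out (v i)) = v (i + 1)) (i : Fin (k + 1)) (j : ℕ) :
    (t ∘ out)^[j] (v i) = v (i + j) := by
  induction j with
  | zero => simp
  | succ j ih =>
    rw [Function.iterate_succ_apply', ih, Function.comp_apply, hcyc, Nat.cast_succ, add_assoc]

theorem exists_iterate_succ_eq_cycle_base (hcyc : ∀ i, t (out (v i)) = v (i + 1))
    (huniq : ∀ w : Fin p, ∀ j : ℕ, 0 < j →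
      (fun w => t (out w))^[j] w = w → ∃ i, v i = w)
    (w : Fin p) : ∃ j, (t ∘ out)^[j + 1] w = v 0 := by
  obtain ⟨a, n, hn, hper⟩ := Function.exists_iterate_mem_periodicPts (t ∘ out) w
  obtain ⟨i, hi⟩ := huniq _ n hn hper
  refine ⟨a + (k - i), ?_⟩
  have hret : i + ((k + 1 - i : ℕ) : Fin (k + 1)) = 0 := by
    ext
    simp [Fin.val_add, Fin.val_natCast]
  rw [show a + (k - i) + 1 = (k + 1 - i) + a by omega, Function.iterate_add_apply, ← hi,
    iterate_apply_cycle hcyc, hret]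

theorem iterate_cycle_base_ne (hvinj : Function.Injective v)
    (hcyc : ∀ i, t (out (v i)) = v (i + 1)) {i : ℕ} (hi : 0 < i) (hik : i ≤ k) :
    (t ∘ out)^[i] (v 0) ≠ v 0 := by
  rw [iterate_apply_cycle hcyc, zero_add, hvinj.ne_iff, ne_eq, Fin.ext_iff, Fin.val_natCast,
    Nat.mod_eq_of_lt (by omega)]
  exact hi.ne'

theorem iterate_cycle_length (hcyc : ∀ i, t (out (v i)) = v (i + 1)) :
    (t ∘ out)^[k + 1] (v 0) = v 0 := by
  rw [iterate_apply_cycle hcyc, Fin.natCast_self, add_zero]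

theorem qHol_cycle (hout_s : ∀ w, s (out w) = w) (hout : ∀ e, e = out (s e))
    (hcyc : ∀ i, t (out (v i)) = v (i + 1)) :
    qHol p m s t nv U (List.ofFn fun i => out (v i)) =
      qProj p nv (v 0) * qTransfer p m s t nv U ^ (k + 1) := by
  rw [qProj_mul_qTransfer_pow_succ hout_s hout, qHol, List.map_ofFn]
  congr 2
  funext i
  rw [Function.comp_apply, iterate_apply_cycle hcyc, zero_add, Fin.cast_val_eq_self]

theorem qProj_mul_sum_pow_mul_qProj_eq_qHol (hout_s : ∀ w, s (out w) = w)
    (hout : ∀ e, e = out (s e)) (hvinj : Function.Injective v)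
    (hcyc : ∀ i, t (out (v i)) = v (i + 1)) {r : ℕ} (hr : k + 1 ≤ r) :
    qProj p nv (v 0) *
        (∑ j ∈ Finset.range r, (qTransfer p m s t nv U * (1 - qProj p nv (v 0))) ^ j) *
        qTransfer p m s t nv U * qProj p nv (v 0) =
      qHol p m s t nv U (List.ofFn fun i => out (v i)) := by
  have havoid : ∀ j ≤ k,
      qProj p nv (v 0) * (qTransfer p m s t nv U * (1 - qProj p nv (v 0))) ^ j *
        qTransfer p m s t nv U = qProj p nv (v 0) * qTransfer p m s t nv U ^ (j + 1) :=
    fun j hj => by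
      rw [qProj_mul_pow_eq_of_iterate_ne hout_s hout fun i hi hij =>
        iterate_cycle_base_ne hvinj hcyc hi (hij.trans hj), pow_succ, mul_assoc]
  rw [Finset.mul_sum, Finset.sum_mul, Finset.sum_mul,
    Finset.sum_eq_single_of_mem k (Finset.mem_range.mpr hr)]
  · have hreturn := qProj_mul_qTransfer_pow_mul_qProj_iterate (U := U) hout_s hout (v 0) (k + 1)
    rw [iterate_cycle_length hcyc] at hreturn
    rw [havoid k le_rfl, qHol_cycle hout_s hout hcyc, hreturn]
  intro j _ hjk
  rcases lt_or_gt_of_ne hjk with hlt | hgt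
  · rw [havoid j hlt.le, ← qProj_mul_qTransfer_pow_mul_qProj_iterate hout_s hout, mul_assoc,
      qProj_mul_qProj, if_neg (iterate_cycle_base_ne hvinj hcyc (by omega) hlt), mul_zero]
  · obtain ⟨l, rfl⟩ := Nat.exists_eq_add_of_le hgt
    rw [pow_add, ← mul_assoc, qProj_mul_pow_eq_zero_of_iterate_eq hout_s hout
      (iterate_cycle_length hcyc), zero_mul, zero_mul, zero_mul]

end Cycle

theorem det_qLap_unicyclic_general
    (p m : ℕ) (s t : Fin m → Fin p)
    (x : Fin m → ℂ) (nv : Fin p → ℕ)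
    (U : ∀ e : Fin m, Matrix (Fin (nv (s e))) (Fin (nv (t e))) ℂ)
    (out : Fin p → Fin m) (hout_s : ∀ w, s (out w) = w) (hout : ∀ e, e = out (s e))
    (k : ℕ) (v : Fin (k + 1) → Fin p) (hvinj : Function.Injective v)
    (hcyc : ∀ i : Fin (k + 1), t (out (v i)) = v (i + 1))
    (huniq : ∀ w : Fin p, ∀ j : ℕ, 0 < j →
      (fun w => t (out w))^[j] w = w → ∃ i, v i = w) :
    (qLap p m s t x nv U).det =
      (∏ w, x (out w) ^ nv w) *
        Matrix.det (1 - qHol p m s t nv U (List.ofFn fun i : Fin (k + 1) => out (v i))) := by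
  obtain ⟨r, hr⟩ : ∃ r, (qTransfer p m s t nv U * (1 - qProj p nv (v 0))) ^ r = 0 := by
    choose j hj using exists_iterate_succ_eq_cycle_base hcyc huniq
    exact ⟨_, pow_sum_eq_zero_of_qProj_mul_pow_eq_zero fun w =>
      qProj_mul_pow_eq_zero_of_iterate_eq hout_s hout (hj w)⟩
  have hr' : (qTransfer p m s t nv U * (1 - qProj p nv (v 0))) ^ (r + (k + 1)) = 0 := by
    rw [pow_add, hr, zero_mul]
  rw [qLap_eq_diagonal_mul x hout_s hout, det_mul, det_diagonal_fst fun w => x (out w),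
    det_one_sub_eq_det_one_sub_compression (by rw [qProj_mul_qProj, if_pos rfl]) hr',
    qProj_mul_sum_pow_mul_qProj_eq_qHol hout_s hout hvinj hcyc (by omega)]

/-- Suppose every vertex has exactly one outgoing edge
(`e = out (s e)`, `s (out v) = v`) and that `G` has a unique simple directed
cycle, given by the distinct vertices `v 0, …, v (k-1)` with
`t (out (v i)) = v (i+1)` (cyclically); uniqueness is expressed by saying that
every periodic vertex of the map `w ↦ t (out w)` lies on this cycle.  Then for
any weights and any representation,
`det Δ = (∏_v x_{e_v}^{n_v}) · det(I − U_{e_{v 0}} U_{e_{v 1}} ⋯ U_{e_{v (k-1)}})`. -/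
theorem det_qLap_unicyclic
    (p m : ℕ) (hp : 1 ≤ p) (s t : Fin m → Fin p) (hst : ∀ e, s e ≠ t e)
    (x : Fin m → ℂ) (nv : Fin p → ℕ) (hnv : ∀ w, 1 ≤ nv w)
    (U : ∀ e : Fin m, Matrix (Fin (nv (s e))) (Fin (nv (t e))) ℂ)
    (out : Fin p → Fin m) (hout_s : ∀ w, s (out w) = w) (hout : ∀ e, e = out (s e))
    (k : ℕ) (v : Fin (k + 1) → Fin p) (hvinj : Function.Injective v)
    (hcyc : ∀ i : Fin (k + 1), t (out (v i)) = v (i + 1))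
    (huniq : ∀ w : Fin p, ∀ j : ℕ, 0 < j →
      (fun w => t (out w))^[j] w = w → ∃ i, v i = w) :
    (qLap p m s t x nv U).det =
      (∏ w, x (out w) ^ nv w) *
        Matrix.det (1 - qHol p m s t nv U (List.ofFn fun i : Fin (k + 1) => out (v i))) :=
  det_qLap_unicyclic_general p m s t x nv U out hout_s hout k v hvinj hcyc huniq
end
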